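/- arXiv:2107.04683 — 6 statements merged into one kernel-verified Lean document; each statement's English description precedes it below -/
import Mathlib

section
/- A trim permutation DFA A is composite if and only if A can be decomposed into its orbit-DFAs, i.e., there exist finitely many subsets U_1,…,U_k of its states, each containing the initial state, such that each orbit-DFA A^{U_i} has fewer states than A and L(A) = ⋂_{i=1}^k L(A^{U_i}). -/
open Set

/-- A DFA bundled with a finite state type. -/
structure FinDFA (α : Type) : Type 1 where
  σ : Type
  [fin : Finite σ]
  M : DFA α σ

attribute [instance] FinDFA.fin

/-- The number of states of a bundled DFA. -/
noncomputable def FinDFA.card {α : Type} (B : FinDFA α) : ℕ := Nat.card B.σ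

/-- The language of a bundled DFA. -/
def FinDFA.accepts {α : Type} (B : FinDFA α) : Language α := B.M.accepts

/-- `l` is a decomposition of `A`: every member has fewer states than `A`,
and the language of `A` is the intersection of the languages of the members. -/
def IsDecomposition {α Q : Type} (A : DFA α Q) (l : List (FinDFA α)) : Prop :=
  (∀ B ∈ l, B.card < Nat.card Q) ∧
    ∀ w : List α, w ∈ A.accepts ↔ ∀ B ∈ l, w ∈ B.accepts

/-- `A` is composite if it has a decomposition. -/
def CompositeDFA {α Q : Type} (A : DFA α Q) : Prop :=
  ∃ l : List (FinDFA α), IsDecomposition A l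

/-- `A` is `k`-factor composite if it has a decomposition with at most `k` factors. -/
def IsKFactorComposite {α Q : Type} (A : DFA α Q) (k : ℕ) : Prop :=
  ∃ l : List (FinDFA α), l.length ≤ k ∧ IsDecomposition A l

/-- The width of `A`: the least number of factors in a decomposition of `A`. -/
noncomputable def DFAwidth {α Q : Type} (A : DFA α Q) : ℕ :=
  sInf {k : ℕ | ∃ l : List (FinDFA α), l.length = k ∧ IsDecomposition A l}

/-- `B` is a factor of `A` if it is a member of some decomposition of `A`. -/
def IsFactor {α Q : Type} (A : DFA α Q) (B : FinDFA α) : Prop :=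
  ∃ l : List (FinDFA α), B ∈ l ∧ IsDecomposition A l

/-- `A` is trim: every state is reachable from the initial state. -/
def Trim {α Q : Type} (A : DFA α Q) : Prop :=
  ∀ q : Q, ∃ w : List α, A.eval w = q

/-- `A` is a permutation DFA: every letter acts bijectively on the states. -/
def IsPermutationDFA {α Q : Type} (A : DFA α Q) : Prop :=
  ∀ a : α, Function.Bijective fun q => A.step q a

/-- `A` is commutative. -/
def CommutativeDFA {α Q : Type} (A : DFA α Q) : Prop :=
  ∀ (q : Q) (u v : List α), A.evalFrom q (u ++ v) = A.evalFrom q (v ++ u)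

/-- The image of a set of states under the action of a word. -/
def wordImage {α Q : Type} (A : DFA α Q) (U : Set Q) (w : List α) : Set Q :=
  (fun q => A.evalFrom q w) '' U

/-- The orbit of a set of states: all images of it under words. -/
def orbitOf {α Q : Type} (A : DFA α Q) (U : Set Q) : Set (Set Q) :=
  {V | ∃ w : List α, V = wordImage A U w}

/-- The orbit-DFA `A^U`. Its states are the members of the orbit of `U`, its initial
state is `U`, and its accepting states are the members of the orbit that meet the
accepting states of `A`. -/
def orbitDFA {α Q : Type} (A : DFA α Q) (U : Set Q) : DFA α (orbitOf A U) where
  step V a := ⟨(fun q => A.step q a) '' V.1, by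
    obtain ⟨w, hw⟩ := V.2
    exact ⟨w ++ [a], by
      simp [wordImage, hw, Set.image_image, DFA.evalFrom_append_singleton]⟩⟩
  start := ⟨U, ⟨[], by simp [wordImage]⟩⟩
  accept := {V | (V.1 ∩ A.accept).Nonempty}

/-- The orbit-DFA `A^U` covers a rejecting state `q` of `A` if it is smaller than `A`
and one of its states contains `q` and no accepting state of `A`. -/
def OrbitCovers {α Q : Type} (A : DFA α Q) (U : Set Q) (q : Q) : Prop :=
  Nat.card (orbitOf A U) < Nat.card Q ∧ ∃ V ∈ orbitOf A U, q ∈ V ∧ V ∩ A.accept = ∅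

/-- The `k`-th power of a word. -/
def wpow {α : Type} (u : List α) : ℕ → List α
  | 0 => []
  | k + 1 => u ++ wpow u k

/-- The word `u` covers the rejecting state `q`: `u` moves `q`, and all states reached
from `q` by iterating `u` are rejecting. -/
def WordCovers {α Q : Type} (A : DFA α Q) (u : List α) (q : Q) : Prop :=
  A.evalFrom q u ≠ q ∧ ∀ k : ℕ, A.evalFrom q (wpow u k) ∉ A.accept

/-- `A` is decomposable into its orbit-DFAs. -/
def OrbitDecomposable {α Q : Type} (A : DFA α Q) : Prop :=
  ∃ Us : List (Set Q),
    (∀ U ∈ Us, A.start ∈ U ∧ Nat.card (orbitOf A U) < Nat.card Q) ∧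
    ∀ w : List α, w ∈ A.accepts ↔ ∀ U ∈ Us, w ∈ (orbitDFA A U).accepts


namespace OrbitAux


variable {α : Type}

/-- The action of a word on the states of a DFA. -/
def piw {σ : Type} (M : DFA α σ) (w : List α) : σ → σ := fun s => M.evalFrom s w

lemma piw_nil {σ : Type} (M : DFA α σ) : piw M ([] : List α) = id := by
  funext s; simp [piw]

lemma piw_append {σ : Type} (M : DFA α σ) (u v : List α) :
    piw M (u ++ v) = piw M v ∘ piw M u := by
  funext s; simp [piw, DFA.evalFrom_of_append]

lemma piw_wpow {σ : Type} (M : DFA α σ) (u : List α) (k : ℕ) :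
    piw M (wpow u k) = (piw M u)^[k] := by
  induction k with
  | zero => simpa [wpow] using piw_nil M
  | succ k ih =>
    show piw M (u ++ wpow u k) = _
    rw [piw_append, ih, ← Function.iterate_succ]

lemma piw_cons {σ : Type} (M : DFA α σ) (a : α) (w : List α) :
    piw M (a :: w) = piw M w ∘ (fun q => M.step q a) := rfl

lemma eval_eq_piw {σ : Type} (M : DFA α σ) (w : List α) : M.eval w = piw M w M.start := rfl

lemma eval_append {σ : Type} (M : DFA α σ) (u v : List α) :
    M.eval (u ++ v) = piw M v (M.eval u) := by
  simp [DFA.eval, DFA.evalFrom_of_append, piw]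

lemma loop_wpow {σ : Type} (M : DFA α σ) {t : σ} {z : List α}
    (h : M.evalFrom t z = t) (k : ℕ) : M.evalFrom t (wpow z k) = t := by
  induction k with
  | zero => rfl
  | succ k ih =>
    show M.evalFrom t (z ++ wpow z k) = t
    rw [DFA.evalFrom_of_append, h, ih]



lemma iterate_stab {X : Type} [Finite X] (f : X → X) {c : ℕ}
    (hc : Nat.card (X → X) ≤ c) (hc1 : 1 ≤ c) :
    f^[c.factorial + c.factorial] = f^[c.factorial] := by
  -- pigeonhole: two iterates coincide
  have hninj : ¬ Function.Injective (fun i : Fin (c + 1) => f^[(i : ℕ)]) := by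
    intro hinj
    have := Nat.card_le_card_of_injective _ hinj
    simp only [Nat.card_eq_fintype_card, Fintype.card_fin] at this
    omega
  rw [Function.Injective] at hninj
  push_neg at hninj
  obtain ⟨i, j, hij, hne⟩ := hninj
  -- wlog i < j
  obtain ⟨a, b, hab, hfe⟩ : ∃ a b : ℕ, a < b ∧ b ≤ c ∧ f^[a] = f^[b] := by
    rcases lt_or_gt_of_ne (fun h : (i : ℕ) = (j : ℕ) => hne (Fin.ext h)) with h | h
    · exact ⟨i, j, h, Nat.lt_succ_iff.mp j.isLt, hij⟩
    · exact ⟨j, i, h, Nat.lt_succ_iff.mp i.isLt, hij.symm⟩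
  obtain ⟨hbc, hfe⟩ := hfe
  set p := b - a with hp
  have hp1 : 1 ≤ p := by omega
  have key : ∀ e : ℕ, f^[e + b] = f^[e + a] := by
    intro e
    rw [Function.iterate_add, Function.iterate_add, hfe]
  have step : ∀ n, a ≤ n → f^[n + p] = f^[n] := by
    intro n hn
    have h1 : n + p = (n - a) + b := by omega
    have h2 : (n - a) + a = n := by omega
    rw [h1, key, h2]
  have steps : ∀ d n, a ≤ n → f^[n + d * p] = f^[n] := by
    intro d
    induction d with
    | zero => intro n _; simp
    | succ d ih =>
      intro n hn
      have : n + (d + 1) * p = (n + d * p) + p := by ring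
      rw [this, step _ (by omega), ih n hn]
  have hpc : p ∣ c.factorial := Nat.dvd_factorial (by omega) (by omega)
  have hac : a ≤ c.factorial := le_trans (by omega) (Nat.self_le_factorial c)
  obtain ⟨d, hd⟩ := hpc
  have : c.factorial + c.factorial = c.factorial + d * p := by rw [hd]; ring
  rw [this, steps d _ hac]

lemma iterate_factorial_id {X : Type} [Finite X] {f : X → X} (hf : Function.Bijective f)
    {c : ℕ} (hc : Nat.card (X → X) ≤ c) (hc1 : 1 ≤ c) :
    f^[c.factorial] = id := by
  have h := iterate_stab f hc hc1
  funext x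
  have h1 : f^[c.factorial] (f^[c.factorial] x) = f^[c.factorial] x := by
    rw [← Function.iterate_add_apply, h]
  exact (hf.injective.iterate c.factorial) h1

lemma piw_bijective (A : DFA α Q) (hperm : IsPermutationDFA A) (w : List α) :
    Function.Bijective (piw A w) := by
  induction w with
  | nil => exact Function.bijective_id
  | cons a w ih =>
    show Function.Bijective (piw A w ∘ (fun q => A.step q a))
    exact ih.comp (hperm a)

lemma wordImage_eq_piw (A : DFA α Q) (U : Set Q) (w : List α) :
    wordImage A U w = piw A w '' U := rfl

lemma orbitDFA_eval (A : DFA α Q) (U : Set Q) (w : List α) :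
    ((orbitDFA A U).eval w).1 = wordImage A U w := by
  induction w using List.reverseRecOn with
  | nil =>
    show U = wordImage A U []
    simp [wordImage]
  | append_singleton w a ih =>
    show (((orbitDFA A U).evalFrom _ (w ++ [a])) : Set Q) = _
    rw [DFA.evalFrom_append_singleton]
    show (fun q => A.step q a) '' ((orbitDFA A U).eval w).1 = _
    rw [ih]
    simp [wordImage, Set.image_image, DFA.evalFrom_append_singleton]

lemma orbitDFA_mem_accepts (A : DFA α Q) (U : Set Q) (w : List α) :
    w ∈ (orbitDFA A U).accepts ↔ (wordImage A U w ∩ A.accept).Nonempty := by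
  rw [DFA.mem_accepts]
  show (((orbitDFA A U).eval w).1 ∩ A.accept).Nonempty ↔ _
  rw [orbitDFA_eval]

/-- the rank of the transformation of a word -/
noncomputable def rkOf {σ : Type} (M : DFA α σ) (u : List α) : ℕ :=
  (Set.range (piw M u)).ncard

lemma rk_append_le_left {σ : Type} [Finite σ] (M : DFA α σ) (u v : List α) :
    rkOf M (u ++ v) ≤ rkOf M u := by
  unfold rkOf
  have h : Set.range (piw M (u ++ v)) = piw M v '' Set.range (piw M u) := by
    rw [piw_append, Set.range_comp]
  rw [h]
  exact (Set.ncard_image_le (Set.toFinite _))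

lemma rk_append_le_right {σ : Type} [Finite σ] (M : DFA α σ) (u v : List α) :
    rkOf M (u ++ v) ≤ rkOf M v := by
  unfold rkOf
  apply Set.ncard_le_ncard _ (Set.toFinite _)
  rw [piw_append]
  exact Set.range_comp_subset_range _ _

lemma exists_min_word (l : List (FinDFA α)) :
    ∃ u : List α, ∀ B ∈ l, ∀ v : List α, rkOf B.M u ≤ rkOf B.M v := by
  set ρ : List α → ℕ := fun u => (l.map (fun B => rkOf B.M u)).sum with hρ
  have hne : (Set.range ρ).Nonempty := ⟨ρ [], ⟨[], rfl⟩⟩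
  obtain ⟨u, hu⟩ := Nat.sInf_mem hne
  refine ⟨u, fun B hB v => ?_⟩
  by_contra hcon
  push_neg at hcon
  have hlt : ρ (u ++ v) < ρ u := by
    apply List.sum_lt_sum
    · intro B' _
      exact rk_append_le_left B'.M u v
    · exact ⟨B, hB, lt_of_le_of_lt (rk_append_le_right B.M u v) hcon⟩
  have := Nat.sInf_le (Set.mem_range_self (f := ρ) (u ++ v))
  omega

/-- The return lemma: from a state `t` fixed by the minimal-rank idempotent, any two
words with the same destination differ by a loop at `t` whose action can be realized. -/
lemma return_lemma {Q σB : Type} [Finite Q] [Finite σB]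
    (A : DFA α Q) (hperm : IsPermutationDFA A) (BM : DFA α σB) (c : ℕ)
    (hcQ : Nat.card (Q → Q) ≤ c) (hcB : Nat.card (σB → σB) ≤ c) (hc1 : 1 ≤ c)
    (ustar : List α)
    (hmin : ∀ v : List α, rkOf BM ustar ≤ rkOf BM v)
    (t : σB) (ht : piw BM (wpow ustar c.factorial) t = t)
    (y y' : List α) (hyy : BM.evalFrom t y = BM.evalFrom t y') :
    ∃ z : List α, BM.evalFrom t z = t ∧ piw A y ∘ piw A z = piw A y' := by
  set m := c.factorial with hmdef
  have hm1 : 1 ≤ m := Nat.factorial_pos c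
  set uhat := wpow ustar m with huhat
  set f := piw BM y with hf
  set eh := piw BM uhat with heh
  have hehit : eh = (piw BM ustar)^[m] := piw_wpow BM ustar m
  have hehidem : eh ∘ eh = eh := by
    rw [hehit, ← Function.iterate_add, iterate_stab _ hcB hc1]
  -- rank of eh equals the minimal rank
  have hrkuhat : rkOf BM uhat = rkOf BM ustar := by
    refine le_antisymm ?_ (hmin uhat)
    have : uhat = ustar ++ wpow ustar (m - 1) := by
      rw [huhat, show m = (m-1)+1 by omega]; rfl
    rw [this]
    exact rk_append_le_left BM ustar _
  set cw := uhat ++ (wpow y m ++ uhat) with hcw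
  set h := piw BM cw with hh
  have hhe : h = eh ∘ (f^[m] ∘ eh) := by
    rw [hh, hcw, piw_append, piw_append, piw_wpow, piw_wpow, hehit, hf]
    funext s; rfl
  set K := Set.range eh with hK
  have hKfin : K.Finite := Set.toFinite _
  have hrange_sub : Set.range h ⊆ K := by
    rw [hhe, hK]
    exact Set.range_comp_subset_range _ _
  have hrange_eq : Set.range h = K := by
    apply Set.eq_of_subset_of_ncard_le hrange_sub _ hKfin
    have h1 : K.ncard = rkOf BM ustar := by rw [hK, heh, ← hrkuhat]; rfl
    have h2 : (Set.range h).ncard = rkOf BM cw := rfl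
    rw [h1, h2]; exact hmin cw
  have hhcompeh : h ∘ eh = h := by
    rw [hhe]
    calc (eh ∘ (f^[m] ∘ eh)) ∘ eh = eh ∘ (f^[m] ∘ (eh ∘ eh)) := rfl
    _ = eh ∘ (f^[m] ∘ eh) := by rw [hehidem]
  have himgK : h '' K = K := by
    rw [hK, ← Set.range_comp, hhcompeh, ← hK, hrange_eq]
  have hinjK : Set.InjOn h K := by
    apply Set.injOn_of_ncard_image_eq _ hKfin
    rw [himgK]
  have hmapsK : ∀ x ∈ K, h x ∈ K := fun x _ => hrange_sub ⟨x, rfl⟩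
  have hiterK : ∀ n, (∀ x ∈ K, h^[n] x ∈ K) ∧ Set.InjOn h^[n] K := by
    intro n
    induction n with
    | zero => exact ⟨fun x hx => by simpa using hx, by simp [Set.injOn_id]⟩
    | succ n ih =>
      constructor
      · intro x hx
        rw [Function.iterate_succ_apply]
        exact ih.1 _ (hmapsK x hx)
      · intro x hx x' hx' hxe
        rw [Function.iterate_succ_apply, Function.iterate_succ_apply] at hxe
        have := ih.2 (hmapsK x hx) (hmapsK x' hx') hxe
        exact hinjK hx hx' this
  have hhfix : ∀ x ∈ K, h^[m] x = x := by
    intro x hx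
    have hstab : h^[m + m] = h^[m] := iterate_stab h hcB hc1
    have h1 : h^[m] (h^[m] x) = h^[m] x := by
      rw [← Function.iterate_add_apply, hstab]
    exact (hiterK m).2 ((hiterK m).1 x hx) hx h1
  have htK : t ∈ K := by rw [hK, ← ht]; exact ⟨t, rfl⟩
  -- the word z
  refine ⟨y' ++ (wpow y (m - 1) ++ (uhat ++ wpow cw (m - 1))), ?_, ?_⟩
  · -- state computation
    rw [DFA.evalFrom_of_append, DFA.evalFrom_of_append, DFA.evalFrom_of_append]
    have e1 : BM.evalFrom t y' = f t := hyy.symm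
    rw [e1]
    have e2 : BM.evalFrom (f t) (wpow y (m - 1)) = f^[m] t := by
      show piw BM (wpow y (m-1)) (f t) = _
      rw [piw_wpow, ← hf, ← Function.iterate_succ_apply, show (m-1).succ = m by omega]
    rw [e2]
    have e3 : BM.evalFrom (f^[m] t) uhat = h t := by
      show eh (f^[m] t) = h t
      rw [hhe]
      show eh (f^[m] t) = eh (f^[m] (eh t))
      rw [show eh t = t from ht]
    rw [e3]
    have e4 : BM.evalFrom (h t) (wpow cw (m - 1)) = t := by
      show piw BM (wpow cw (m-1)) (h t) = t
      rw [piw_wpow, ← hh, ← Function.iterate_succ_apply, show (m-1).succ = m by omega]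
      exact hhfix t htK
    exact e4
  · -- action computation
    have hidQ : ∀ w : List α, (piw A w)^[m] = id := fun w =>
      iterate_factorial_id (piw_bijective A hperm w) hcQ hc1
    have hAcw : piw A cw = id := by
      rw [hcw, piw_append, piw_append, piw_wpow, piw_wpow, hidQ ustar, hidQ y]
      simp
    rw [piw_append, piw_append, piw_append, piw_wpow, piw_wpow, piw_wpow, hAcw,
      hidQ ustar, Function.iterate_id]
    simp only [Function.comp_id, Function.id_comp]
    show piw A y ∘ ((piw A y)^[m-1] ∘ piw A y') = piw A y'
    rw [← Function.comp_assoc, ← Function.iterate_succ', show (m-1).succ = m by omega, hidQ y]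
    simp


end OrbitAux

namespace OrbitAux

lemma key {α Q : Type} [Finite Q] (A : DFA α Q) (hperm : IsPermutationDFA A)
    {l : List (FinDFA α)} (hdec : IsDecomposition A l) (w0 : List α)
    (hw0 : A.eval w0 ∉ A.accept) :
    ∃ U : Set Q, A.start ∈ U ∧ Nat.card (orbitOf A U) < Nat.card Q ∧
      ∀ w : List α, piw A w = piw A w0 → wordImage A U w ∩ A.accept = ∅ := by
  classical
  set c := Nat.card (Q → Q) + (l.map (fun B => Nat.card (B.σ → B.σ))).sum + 2 with hc
  have hc1 : 1 ≤ c := by omega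
  have hcQ : Nat.card (Q → Q) ≤ c := by omega
  set m := c.factorial with hm
  have hm1 : 1 ≤ m := Nat.factorial_pos c
  have hidQ : ∀ w : List α, (piw A w)^[m] = id := fun w =>
    iterate_factorial_id (piw_bijective A hperm w) hcQ hc1
  obtain ⟨ustar, hustar⟩ := exists_min_word (α := α) l
  have hAuhat : piw A (wpow ustar m) = id := by rw [piw_wpow]; exact hidQ ustar
  set r := w0 ++ wpow ustar m with hr
  have hevalr : A.eval r = A.eval w0 := by
    rw [hr, eval_append, hAuhat]; rfl
  have hrnot : r ∉ A.accepts := by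
    rw [DFA.mem_accepts, hevalr]; exact hw0
  have hexB : ∃ B ∈ l, r ∉ B.accepts := by
    by_contra hcon
    push_neg at hcon
    exact hrnot ((hdec.2 r).2 hcon)
  obtain ⟨B, hBl, hBr⟩ := hexB
  have hcB : Nat.card (B.σ → B.σ) ≤ c := by
    have hmem : Nat.card (B.σ → B.σ) ∈ l.map (fun B => Nat.card (B.σ → B.σ)) :=
      List.mem_map_of_mem hBl
    have := List.single_le_sum (fun x _ => Nat.zero_le x) _ hmem
    omega
  set t := B.M.eval r with htdef
  have hBr' : r ∉ B.M.accepts := hBr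
  have htrej : t ∉ B.M.accept := by
    rw [DFA.mem_accepts] at hBr'
    rwa [← htdef] at hBr'
  have hehidem : piw B.M (wpow ustar m) ∘ piw B.M (wpow ustar m) = piw B.M (wpow ustar m) := by
    rw [piw_wpow, ← Function.iterate_add]
    exact iterate_stab _ hcB hc1
  have ht : piw B.M (wpow ustar m) t = t := by
    have h0 : t = piw B.M (wpow ustar m) (B.M.eval w0) := by rw [htdef, hr, eval_append]
    rw [h0, ← Function.comp_apply (f := piw B.M (wpow ustar m)), hehidem]
  have RL := return_lemma A hperm B.M c hcQ hcB hc1 ustar (hustar B hBl) t ht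
  -- group elements
  set g := piw A w0 with hg
  set ginv := piw A (wpow w0 (m - 1)) with hginv
  have hgginv : g ∘ ginv = id := by
    rw [hg, hginv, piw_wpow, ← Function.iterate_succ', show (m-1).succ = m by omega]
    exact hidQ w0
  have hginvg : ginv ∘ g = id := by
    rw [hg, hginv, piw_wpow, ← Function.iterate_succ, show (m-1).succ = m by omega]
    exact hidQ w0
  -- the loop group at t
  set H := {k : Q → Q | ∃ z : List α, k = piw A z ∧ B.M.evalFrom t z = t} with hH
  have hidH : id ∈ H := ⟨[], (piw_nil A).symm, rfl⟩
  have hHmul : ∀ h1 ∈ H, ∀ h2 ∈ H, h1 ∘ h2 ∈ H := by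
    rintro h1 ⟨z1, rfl, hz1⟩ h2 ⟨z2, rfl, hz2⟩
    exact ⟨z2 ++ z1, (piw_append A z2 z1).symm, by
      rw [DFA.evalFrom_of_append, hz2, hz1]⟩
  have hHinv : ∀ h ∈ H, ∃ h' ∈ H, h ∘ h' = id ∧ h' ∘ h = id := by
    rintro h ⟨z, rfl, hz⟩
    refine ⟨piw A (wpow z (m-1)), ⟨wpow z (m-1), rfl, loop_wpow B.M hz (m-1)⟩, ?_, ?_⟩
    · rw [piw_wpow, ← Function.iterate_succ', show (m-1).succ = m by omega]; exact hidQ z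
    · rw [piw_wpow, ← Function.iterate_succ, show (m-1).succ = m by omega]; exact hidQ z
  set p0 := A.eval r with hp0
  set S := (fun k : Q → Q => k p0) '' H with hS
  set U := g ⁻¹' S with hU
  have hgU : g '' U = S := Set.image_preimage_eq S (piw_bijective A hperm w0).surjective
  have hSF : ∀ p ∈ S, p ∉ A.accept := by
    rintro p ⟨k, ⟨z, rfl, hz⟩, rfl⟩
    have h1 : piw A z p0 = A.eval (r ++ z) := by rw [hp0, eval_append A r z]
    show piw A z p0 ∉ A.accept
    rw [h1]
    have h3 : B.M.eval (r ++ z) = t := by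
      rw [eval_append, ← htdef]; exact hz
    have h2 : r ++ z ∉ B.M.accepts := by
      rw [DFA.mem_accepts, h3]; exact htrej
    intro hacc
    have h4 : r ++ z ∈ A.accepts := by rw [DFA.mem_accepts]; exact hacc
    exact h2 ((hdec.2 (r ++ z)).1 h4 B hBl)
  have hstart : A.start ∈ U := by
    show g A.start ∈ S
    have h0 : g A.start = p0 := by rw [hevalr]; rfl
    rw [h0]
    exact ⟨id, hidH, rfl⟩
  have himg : ∀ w : List α, piw A w = piw A w0 → wordImage A U w ∩ A.accept = ∅ := by
    intro w hw
    rw [wordImage_eq_piw, hw, ← hg, hgU]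
    apply Set.eq_empty_iff_forall_notMem.mpr
    rintro p ⟨hpS, hpF⟩
    exact hSF p hpS hpF
  -- S is H-invariant
  have hSh : ∀ h ∈ H, h '' S = S := by
    intro h hh
    apply Set.Subset.antisymm
    · rintro p ⟨q, ⟨k, hk, rfl⟩, rfl⟩
      exact ⟨h ∘ k, hHmul h hh k hk, rfl⟩
    · rintro p ⟨k, hk, rfl⟩
      obtain ⟨h', hh', hhh', _⟩ := hHinv h hh
      refine ⟨(h' ∘ k) p0, ⟨h' ∘ k, hHmul h' hh' k hk, rfl⟩, ?_⟩
      show (h ∘ (h' ∘ k)) p0 = k p0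
      rw [← Function.comp_assoc, hhh']
      rfl
  have hginvS : ginv '' S = U := by
    apply Set.Subset.antisymm
    · rintro p ⟨q, hq, rfl⟩
      show g (ginv q) ∈ S
      rw [← Function.comp_apply (f := g), hgginv]
      simpa using hq
    · intro p hp
      refine ⟨g p, hp, ?_⟩
      rw [← Function.comp_apply (f := ginv), hginvg]
      rfl
  -- the realizable transformations
  set GS := {k : Q → Q | ∃ v : List α, k = piw A v} with hGS
  -- injection 1 : GS ↪ B.σ × H
  have hcard1 : Nat.card GS ≤ Nat.card (B.σ × H) := by
    obtain ⟨y0, hy0⟩ : ∃ y0 : B.σ → List α, ∀ s : B.σ,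
        (∃ y : List α, B.M.evalFrom t y = s) → B.M.evalFrom t (y0 s) = s := by
      refine ⟨fun s => if h : ∃ y : List α, B.M.evalFrom t y = s then h.choose else [], ?_⟩
      intro s hs
      simp only [dif_pos hs]
      exact hs.choose_spec
    have main1 : ∀ k : GS, ∃ p : B.σ × H,
        (k : Q → Q) = piw A (y0 p.1) ∘ (p.2 : Q → Q) := by
      rintro ⟨k, v, rfl⟩
      set s := B.M.evalFrom t v with hs
      have hbase : B.M.evalFrom t (y0 s) = s := hy0 s ⟨v, rfl⟩
      obtain ⟨z, hzloop, hzeq⟩ := RL (y0 s) v (hbase.trans hs)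
      exact ⟨(s, ⟨piw A z, ⟨z, rfl, hzloop⟩⟩), hzeq.symm⟩
    choose Φ hΦ using main1
    have hinj : Function.Injective Φ := by
      intro k k' he
      apply Subtype.ext
      rw [hΦ k, hΦ k', he]
    exact Nat.card_le_card_of_injective Φ hinj
  -- injection 2 : orbit × H ↪ GS
  have hcard2 : Nat.card ((orbitOf A U) × H) ≤ Nat.card GS := by
    have main2 : ∀ p : (orbitOf A U) × H, ∃ k : GS,
        ((k : Q → Q) '' U = (p.1 : Set Q)) ∧
        (k : Q → Q) = piw A (Exists.choose p.1.2) ∘ (ginv ∘ ((p.2 : Q → Q) ∘ g)) := by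
      rintro ⟨V, h⟩
      obtain ⟨z, hz, hzloop⟩ := h.2
      have hxV : (V : Set Q) = wordImage A U (Exists.choose V.2) := V.2.choose_spec
      refine ⟨⟨piw A (Exists.choose V.2) ∘ (ginv ∘ ((h : Q → Q) ∘ g)),
        ⟨w0 ++ (z ++ (wpow w0 (m-1) ++ Exists.choose V.2)), ?_⟩⟩, ?_, rfl⟩
      · rw [piw_append, piw_append, piw_append, ← hg, ← hginv, ← hz]
        funext q; rfl
      · show (piw A (Exists.choose V.2) ∘ (ginv ∘ ((h : Q → Q) ∘ g))) '' U = (V : Set Q)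
        rw [Set.image_comp, Set.image_comp, Set.image_comp, hgU, hSh _ h.2, hginvS]
        exact hxV.symm
    choose Ψ hΨ using main2
    have hinj : Function.Injective Ψ := by
      rintro ⟨V, h⟩ ⟨V', h'⟩ he
      have h1 := (hΨ ⟨V, h⟩).1
      have h2 := (hΨ ⟨V', h'⟩).1
      have hVeq : (V : Set Q) = (V' : Set Q) := by rw [← h1, ← h2, he]
      have hV : V = V' := Subtype.ext hVeq
      subst hV
      have h3 := (hΨ ⟨V, h⟩).2
      have h4 := (hΨ ⟨V, h'⟩).2
      have hcomp : piw A (Exists.choose V.2) ∘ (ginv ∘ ((h : Q → Q) ∘ g)) =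
          piw A (Exists.choose V.2) ∘ (ginv ∘ ((h' : Q → Q) ∘ g)) := by
        rw [← h3, ← h4, he]
      have hfun : (h : Q → Q) = (h' : Q → Q) := by
        funext x
        obtain ⟨q, rfl⟩ := (piw_bijective A hperm w0).surjective x
        have h5 := congrFun hcomp q
        simp only [Function.comp_apply] at h5
        have h6 := (piw_bijective A hperm (Exists.choose V.2)).injective h5
        have h7 := (piw_bijective A hperm (wpow w0 (m-1))).injective h6
        exact h7
      exact congrArg (Prod.mk V) (Subtype.ext hfun)
    exact Nat.card_le_card_of_injective Ψ hinj
  have hne : Nonempty H := ⟨⟨id, hidH⟩⟩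
  have hHpos : 0 < Nat.card H := Nat.card_pos
  have hBcard : Nat.card B.σ < Nat.card Q := hdec.1 B hBl
  have hle : Nat.card (orbitOf A U) * Nat.card H ≤ Nat.card B.σ * Nat.card H := by
    rw [← Nat.card_prod, ← Nat.card_prod]
    exact le_trans hcard2 hcard1
  have horb : Nat.card (orbitOf A U) ≤ Nat.card B.σ := Nat.le_of_mul_le_mul_right hle hHpos
  exact ⟨U, hstart, lt_of_le_of_lt horb hBcard, himg⟩

end OrbitAux
/-- A trim permutation DFA is composite iff it can be decomposed into its
orbit-DFAs. -/
theorem composite_iff_orbitDecomposable {α Q : Type} [Finite Q] (A : DFA α Q)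
    (htrim : Trim A) (hperm : IsPermutationDFA A) :
    CompositeDFA A ↔ OrbitDecomposable A := by
  classical
  constructor
  · rintro ⟨l, hdec⟩
    set RejS := {f : Q → Q | (∃ v : List α, f = OrbitAux.piw A v) ∧ f A.start ∉ A.accept}
      with hRejS
    have hex : ∀ f : Q → Q, ∃ U : Set Q, f ∈ RejS →
        A.start ∈ U ∧ Nat.card (orbitOf A U) < Nat.card Q ∧
          ∀ w : List α, OrbitAux.piw A w = f → wordImage A U w ∩ A.accept = ∅ := by
      intro f
      by_cases hf : f ∈ RejS
      · obtain ⟨⟨v, rfl⟩, hrej⟩ := hf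
        obtain ⟨U, ha, hb, hc⟩ := OrbitAux.key A hperm hdec v hrej
        exact ⟨U, fun _ => ⟨ha, hb, hc⟩⟩
      · exact ⟨∅, fun h => absurd h hf⟩
    choose UF hUF using hex
    have hRfin : RejS.Finite := Set.toFinite _
    refine ⟨hRfin.toFinset.toList.map UF, ?_, ?_⟩
    · intro U hu
      rw [List.mem_map] at hu
      obtain ⟨f, hf, rfl⟩ := hu
      rw [Finset.mem_toList, Set.Finite.mem_toFinset] at hf
      exact ⟨(hUF f hf).1, (hUF f hf).2.1⟩
    · intro w
      constructor
      · intro hw U hu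
        rw [List.mem_map] at hu
        obtain ⟨f, hf, rfl⟩ := hu
        rw [Finset.mem_toList, Set.Finite.mem_toFinset] at hf
        rw [OrbitAux.orbitDFA_mem_accepts]
        refine ⟨A.eval w, ⟨A.start, (hUF f hf).1, rfl⟩, ?_⟩
        rwa [DFA.mem_accepts] at hw
      · intro hall
        by_contra hw
        have hrej : OrbitAux.piw A w ∈ RejS := by
          refine ⟨⟨w, rfl⟩, ?_⟩
          rw [DFA.mem_accepts] at hw
          exact hw
        have hmem : UF (OrbitAux.piw A w) ∈ hRfin.toFinset.toList.map UF := by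
          apply List.mem_map_of_mem
          rw [Finset.mem_toList, Set.Finite.mem_toFinset]
          exact hrej
        have hU := hall _ hmem
        rw [OrbitAux.orbitDFA_mem_accepts] at hU
        rw [(hUF _ hrej).2.2 w rfl] at hU
        exact Set.not_nonempty_empty hU
  · rintro ⟨Us, h1, h2⟩
    refine ⟨Us.map (fun U => (⟨↥(orbitOf A U), orbitDFA A U⟩ : FinDFA α)), ?_, ?_⟩
    · intro Bb hb
      rw [List.mem_map] at hb
      obtain ⟨U, hU, rfl⟩ := hb
      exact (h1 U hU).2
    · intro w
      rw [h2 w]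
      constructor
      · intro h Bb hb
        rw [List.mem_map] at hb
        obtain ⟨U, hU, rfl⟩ := hb
        exact h U hU
      · intro h U hU
        exact h _ (List.mem_map_of_mem hU)
end

section
/- A trim permutation DFA A is decomposable into its orbit-DFAs if and only if every rejecting state of A is covered by some orbit-DFA A' of A satisfying |A'| < |A|. -/
open Set

section AuxLemmas

variable {α Q : Type}

lemma wordImage_nil (A : DFA α Q) (U : Set Q) : wordImage A U [] = U := by
  simp [wordImage]

lemma wordImage_append (A : DFA α Q) (U : Set Q) (u v : List α) :
    wordImage A U (u ++ v) = wordImage A (wordImage A U u) v := by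
  simp [wordImage, Set.image_image, DFA.evalFrom_of_append]

lemma wordImage_of_id (A : DFA α Q) (U : Set Q) {u : List α}
    (h : ∀ q, A.evalFrom q u = q) : wordImage A U u = U := by
  have h2 : (fun q => A.evalFrom q u) = id := funext h
  simp [wordImage, h2]

lemma evalFrom_bijective (A : DFA α Q) (hperm : IsPermutationDFA A) (w : List α) :
    Function.Bijective (fun q => A.evalFrom q w) := by
  induction w with
  | nil => exact Function.bijective_id
  | cons a t ih =>
      have h : (fun q => A.evalFrom q (a :: t))
          = (fun q => A.evalFrom q t) ∘ (fun q => A.step q a) := rfl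
      rw [h]
      exact ih.comp (hperm a)

lemma evalFrom_wpow (A : DFA α Q) (u : List α) (k : ℕ) (q : Q) :
    A.evalFrom q (wpow u k) = (fun p => A.evalFrom p u)^[k] q := by
  induction k generalizing q with
  | zero => simp [wpow]
  | succ k ih =>
      show A.evalFrom q (u ++ wpow u k) = _
      rw [DFA.evalFrom_of_append, ih, Function.iterate_succ_apply]

lemma exists_inverse [Finite Q] (A : DFA α Q) (hperm : IsPermutationDFA A) (w : List α) :
    ∃ v : List α, (∀ q, A.evalFrom q (w ++ v) = q) ∧ (∀ q, A.evalFrom q (v ++ w) = q) := by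
  have hbij := evalFrom_bijective A hperm w
  obtain ⟨n, hn, hid⟩ : ∃ n, 0 < n ∧ ∀ q, (fun p => A.evalFrom p w)^[n] q = q := by
    let e : Equiv.Perm Q := Equiv.ofBijective _ hbij
    refine ⟨orderOf e, orderOf_pos e, fun q => ?_⟩
    have h1 : e ^ orderOf e = 1 := pow_orderOf_eq_one e
    have h2 : (e ^ orderOf e) q = q := by rw [h1]; rfl
    rw [Equiv.Perm.coe_pow] at h2
    exact h2
  obtain ⟨m, rfl⟩ : ∃ m, n = m + 1 := ⟨n - 1, (Nat.succ_pred_eq_of_pos hn).symm⟩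
  have key : ∀ q, A.evalFrom q (w ++ wpow w m) = q := by
    intro q
    have h3 : A.evalFrom q (wpow w (m + 1)) = q := by rw [evalFrom_wpow]; exact hid q
    exact h3
  refine ⟨wpow w m, key, fun q => ?_⟩
  obtain ⟨p, hp⟩ := hbij.2 q
  have h2 := key p
  rw [DFA.evalFrom_of_append] at h2
  rw [DFA.evalFrom_of_append, ← hp, h2]

lemma orbit_trans (A : DFA α Q) {U V : Set Q} (h : V ∈ orbitOf A U) :
    orbitOf A V ⊆ orbitOf A U := by
  obtain ⟨u, rfl⟩ := h
  rintro W ⟨v, rfl⟩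
  exact ⟨u ++ v, (wordImage_append A U u v).symm⟩

lemma orbit_eq [Finite Q] (A : DFA α Q) (hperm : IsPermutationDFA A)
    {U V : Set Q} (h : V ∈ orbitOf A U) : orbitOf A V = orbitOf A U := by
  obtain ⟨u, rfl⟩ := h
  refine Set.Subset.antisymm (orbit_trans A ⟨u, rfl⟩) (orbit_trans A ?_)
  obtain ⟨v, hv, -⟩ := exists_inverse A hperm u
  exact ⟨v, by rw [← wordImage_append, wordImage_of_id A U hv]⟩

lemma orbitDFA_evalFrom (A : DFA α Q) (U : Set Q) (V : orbitOf A U) (w : List α) :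
    ((orbitDFA A U).evalFrom V w).1 = wordImage A V.1 w := by
  induction w generalizing V with
  | nil => simp [wordImage_nil, DFA.evalFrom]
  | cons a t ih =>
      have h : (orbitDFA A U).evalFrom V (a :: t)
          = (orbitDFA A U).evalFrom ((orbitDFA A U).step V a) t := rfl
      rw [h, ih]
      show wordImage A ((fun q => A.step q a) '' V.1) t = wordImage A V.1 (a :: t)
      simp [wordImage, Set.image_image]

lemma orbitDFA_accepts (A : DFA α Q) (U : Set Q) (w : List α) :
    w ∈ (orbitDFA A U).accepts ↔ (wordImage A U w ∩ A.accept).Nonempty := by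
  rw [DFA.mem_accepts]
  show (((orbitDFA A U).evalFrom (orbitDFA A U).start w).1 ∩ A.accept).Nonempty ↔ _
  rw [orbitDFA_evalFrom]
  exact Iff.rfl

end AuxLemmas

/-- A trim permutation DFA is decomposable into its orbit-DFAs iff every
rejecting state is covered by some orbit-DFA smaller than `A`. -/
theorem orbitDecomposable_iff_covered {α Q : Type} [Finite Q] (A : DFA α Q)
    (htrim : Trim A) (hperm : IsPermutationDFA A) :
    OrbitDecomposable A ↔
      ∀ q : Q, q ∉ A.accept → ∃ U : Set Q, A.start ∈ U ∧ OrbitCovers A U q := by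
  
  constructor
  · rintro ⟨Us, hUs, hlang⟩ q hq
    obtain ⟨w, hw⟩ := htrim q
    have hwnot : w ∉ A.accepts := by
      rw [DFA.mem_accepts, hw]; exact hq
    have : ¬ ∀ U ∈ Us, w ∈ (orbitDFA A U).accepts := fun h => hwnot ((hlang w).2 h)
    push_neg at this
    obtain ⟨U, hUmem, hUrej⟩ := this
    obtain ⟨hstart, hcard⟩ := hUs U hUmem
    refine ⟨U, hstart, hcard, wordImage A U w, ⟨w, rfl⟩, ⟨A.start, hstart, hw⟩,
      Set.not_nonempty_iff_eq_empty.1 fun hne => hUrej ((orbitDFA_accepts A U w).2 hne)⟩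
  · intro hcov
    haveI : Finite (Set Q) := inferInstance
    have hfin : {U : Set Q | A.start ∈ U ∧ Nat.card (orbitOf A U) < Nat.card Q}.Finite :=
      Set.toFinite _
    refine ⟨hfin.toFinset.toList, ?_, ?_⟩
    · intro U hU
      rw [Finset.mem_toList, Set.Finite.mem_toFinset] at hU
      exact hU
    · intro w
      constructor
      · intro hw U hU
        rw [Finset.mem_toList, Set.Finite.mem_toFinset] at hU
        rw [orbitDFA_accepts]
        exact ⟨A.eval w, ⟨A.start, hU.1, rfl⟩, (DFA.mem_accepts A).1 hw⟩
      · intro hall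
        by_contra hw
        rw [DFA.mem_accepts] at hw
        obtain ⟨U, hstart, hcard, V, hVorb, hqV, hVF⟩ := hcov (A.eval w) hw
        obtain ⟨vinv, hwv, hvw⟩ := exists_inverse A hperm w
        set U' : Set Q := wordImage A V vinv with hU'
        have hU'orb : U' ∈ orbitOf A V := ⟨vinv, rfl⟩
        have horbeq : orbitOf A U' = orbitOf A U := by
          rw [orbit_eq A hperm hU'orb, orbit_eq A hperm hVorb]
        have hstartU' : A.start ∈ U' := by
          refine ⟨A.eval w, hqV, ?_⟩
          have := hwv A.start
          rwa [DFA.evalFrom_of_append] at this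
        have hmem : U' ∈ hfin.toFinset.toList := by
          rw [Finset.mem_toList, Set.Finite.mem_toFinset]
          exact ⟨hstartU', by rwa [horbeq]⟩
        have hacc := hall U' hmem
        rw [orbitDFA_accepts, hU', ← wordImage_append, wordImage_of_id A V hvw, hVF] at hacc
        exact Set.not_nonempty_empty hacc
end

section
/- For every k ∈ ℕ, a trim commutative permutation DFA A is k-factor composite if and only if there exist k words u_1,…,u_k ∈ Σ* such that every rejecting state of A is covered by at least one of the words u_1,…,u_k. -/
open Set

namespace KFC

set_option linter.unusedSectionVars false

variable {α Q : Type} [Finite Q] (A : DFA α Q)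

lemma wpow_add (u : List α) (s t : ℕ) : wpow u (s + t) = wpow u s ++ wpow u t := by
  induction s with
  | zero => simp [wpow]
  | succ n ih => rw [Nat.succ_add, wpow, wpow, ih, List.append_assoc]

lemma wpow_succ' (u : List α) (t : ℕ) : wpow u (t + 1) = wpow u t ++ u := by
  rw [wpow_add, wpow, wpow, List.append_nil]

lemma ev_app (q : Q) (u v : List α) :
    A.evalFrom q (u ++ v) = A.evalFrom (A.evalFrom q u) v :=
  A.evalFrom_of_append q u v

lemma ev_bij (hperm : IsPermutationDFA A) (w : List α) :
    Function.Bijective fun q => A.evalFrom q w := by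
  induction w using List.reverseRecOn with
  | nil => exact Function.bijective_id
  | append_singleton u a ih =>
      have h : (fun q => A.evalFrom q (u ++ [a])) =
          (fun q => A.step q a) ∘ (fun q => A.evalFrom q u) := by
        funext q; simp [ev_app]
      rw [h]
      exact (hperm a).comp ih

lemma ev_comm (hcomm : CommutativeDFA A) (q : Q) (u v : List α) :
    A.evalFrom (A.evalFrom q u) v = A.evalFrom (A.evalFrom q v) u := by
  rw [← ev_app, ← ev_app, hcomm]

lemma fix_all (htrim : Trim A) (hperm : IsPermutationDFA A) (hcomm : CommutativeDFA A)
    {w : List α} {q : Q} (h : A.evalFrom q w = q) (p : Q) : A.evalFrom p w = p := by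
  obtain ⟨u, hu⟩ := htrim q
  have h1 : A.evalFrom (A.evalFrom A.start w) u = A.evalFrom A.start u := by
    rw [ev_comm A hcomm]; rw [DFA.eval] at hu; rw [hu, h]
  have hs : A.evalFrom A.start w = A.start := (ev_bij A hperm u).injective h1
  obtain ⟨v, hv⟩ := htrim p
  rw [DFA.eval] at hv
  rw [← hv, ev_comm A hcomm, hs]

lemma ev_wpow_succ (q : Q) (u : List α) (t : ℕ) :
    A.evalFrom q (wpow u (t + 1)) = A.evalFrom (A.evalFrom q u) (wpow u t) := by
  rw [wpow, ev_app]

def cyc (A : DFA α Q) (u : List α) (x : Q) : Set Q :=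
  {y | ∃ t : ℕ, A.evalFrom x (wpow u t) = y}

lemma cyc_self (u : List α) (x : Q) : x ∈ cyc A u x := ⟨0, rfl⟩

lemma ev_wpow_add (q : Q) (u : List α) (s t : ℕ) :
    A.evalFrom q (wpow u (s + t)) = A.evalFrom (A.evalFrom q (wpow u s)) (wpow u t) := by
  rw [wpow_add, ev_app]

lemma exists_period (hperm : IsPermutationDFA A) (u : List α) :
    ∃ N : ℕ, 1 ≤ N ∧ ∀ q : Q, A.evalFrom q (wpow u N) = q := by
  obtain ⟨a, b, hab, heq⟩ :=
    Finite.exists_ne_map_eq_of_infinite (fun t : ℕ => fun q : Q => A.evalFrom q (wpow u t))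
  rcases Nat.lt_or_ge a b with hlt | hge
  · refine ⟨b - a, by omega, fun p => ?_⟩
    obtain ⟨q, hq⟩ := (ev_bij A hperm (wpow u a)).surjective p
    have h1 : A.evalFrom q (wpow u (a + (b - a))) = A.evalFrom q (wpow u a) := by
      have : a + (b - a) = b := by omega
      rw [this]; exact (congrFun heq.symm q)
    rw [ev_wpow_add] at h1
    rw [← hq]; exact h1
  · have hlt : b < a := by omega
    refine ⟨a - b, by omega, fun p => ?_⟩
    obtain ⟨q, hq⟩ := (ev_bij A hperm (wpow u b)).surjective p
    have h1 : A.evalFrom q (wpow u (b + (a - b))) = A.evalFrom q (wpow u b) := by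
      have : b + (a - b) = a := by omega
      rw [this]; exact (congrFun heq q)
    rw [ev_wpow_add] at h1
    rw [← hq]; exact h1

lemma cyc_subset {u : List α} {x y : Q} (h : y ∈ cyc A u x) : cyc A u y ⊆ cyc A u x := by
  obtain ⟨t, ht⟩ := h
  rintro z ⟨s, hs⟩
  exact ⟨t + s, by rw [ev_wpow_add, ht, hs]⟩

lemma cyc_symm (hperm : IsPermutationDFA A) {u : List α} {x y : Q}
    (h : y ∈ cyc A u x) : x ∈ cyc A u y := by
  obtain ⟨N, hN1, hN⟩ := exists_period A hperm u
  obtain ⟨t, ht⟩ := h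
  have hmul : ∀ r q, A.evalFrom q (wpow u (N * r)) = q := by
    intro r
    induction r with
    | zero => intro q; rfl
    | succ n ih =>
        intro q
        have : N * (n + 1) = N * n + N := by ring
        rw [this, ev_wpow_add, ih, hN]
  refine ⟨N * (t + 1) - t, ?_⟩
  have hle : t ≤ N * (t + 1) := by nlinarith
  have h2 : A.evalFrom x (wpow u (t + (N * (t + 1) - t))) = x := by
    have : t + (N * (t + 1) - t) = N * (t + 1) := by omega
    rw [this]; exact hmul (t + 1) x
  rw [ev_wpow_add, ht] at h2
  exact h2

lemma cyc_eq_of_mem (hperm : IsPermutationDFA A) {u : List α} {x y : Q}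
    (h : y ∈ cyc A u x) : cyc A u y = cyc A u x :=
  le_antisymm (cyc_subset A h) (cyc_subset A (cyc_symm A hperm h))

lemma wordImage_cyc (hcomm : CommutativeDFA A) (u w : List α) (x : Q) :
    wordImage A (cyc A u x) w = cyc A u (A.evalFrom x w) := by
  ext y
  constructor
  · rintro ⟨z, ⟨t, ht⟩, rfl⟩
    exact ⟨t, by rw [← ht, ev_comm A hcomm]⟩
  · rintro ⟨t, ht⟩
    exact ⟨A.evalFrom x (wpow u t), ⟨t, rfl⟩, by rw [← ht, ev_comm A hcomm]⟩

lemma orbit_eval (U : Set Q) (w : List α) :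
    ((orbitDFA A U).eval w).1 = wordImage A U w := by
  induction w using List.reverseRecOn with
  | nil => simp [wordImage, DFA.eval, orbitDFA]
  | append_singleton v a ih =>
      rw [DFA.eval_append_singleton]
      show (fun q => A.step q a) '' ((orbitDFA A U).eval v).1 = _
      rw [ih]
      simp [wordImage, Set.image_image]

lemma orbit_accepts (U : Set Q) (w : List α) :
    w ∈ (orbitDFA A U).accepts ↔ (wordImage A U w ∩ A.accept).Nonempty := by
  rw [DFA.mem_accepts]
  have h0 : ((orbitDFA A U).eval w ∈ (orbitDFA A U).accept) ↔
      (((orbitDFA A U).eval w).1 ∩ A.accept).Nonempty := Iff.rfl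
  rw [h0, orbit_eval]

lemma dir1 (htrim : Trim A) (hperm : IsPermutationDFA A) (hcomm : CommutativeDFA A)
    {k : ℕ} (us : Fin k → List α)
    (hcov : ∀ q : Q, q ∉ A.accept → ∃ i : Fin k, WordCovers A (us i) q) :
    IsKFactorComposite A k := by
  classical
  set P : Fin k → Prop := fun i => A.evalFrom A.start (us i) ≠ A.start with hP
  set s : Finset (Fin k) := Finset.univ.filter P with hs
  refine ⟨s.toList.map (fun i => ⟨↥(orbitOf A (cyc A (us i) A.start)),
      orbitDFA A (cyc A (us i) A.start)⟩), ?_, ?_, ?_⟩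
  · rw [List.length_map, Finset.length_toList]
    calc s.card ≤ Finset.univ.card := Finset.card_le_univ s
    _ = k := by simp
  · -- sizes
    intro B hB
    rw [List.mem_map] at hB
    obtain ⟨i, hi, rfl⟩ := hB
    rw [Finset.mem_toList, hs, Finset.mem_filter] at hi
    have hPi : A.evalFrom A.start (us i) ≠ A.start := hi.2
    set u := us i with hu
    set W : Set Q := cyc A u A.start with hW
    have horb : ∀ V ∈ orbitOf A W, ∃ x : Q, V = cyc A u x := by
      rintro V ⟨w, rfl⟩
      exact ⟨A.evalFrom A.start w, wordImage_cyc A hcomm u w A.start⟩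
    have hmove : ∀ x : Q, A.evalFrom x u ≠ x := by
      intro x hx
      exact hPi (fix_all A htrim hperm hcomm hx A.start)
    have hmem1 : ∀ x : Q, A.evalFrom x u ∈ cyc A u x := by
      intro x
      refine ⟨1, ?_⟩
      show A.evalFrom x (u ++ wpow u 0) = _
      rw [ev_app]; rfl
    have hinj : ∃ g : ↥(orbitOf A W) × Bool → Q, Function.Injective g := by
      have hx : ∀ V : ↥(orbitOf A W), ∃ x : Q, V.1 = cyc A u x :=
        fun V => horb V.1 V.2
      choose xs hxs using hx
      refine ⟨fun p => if p.2 then A.evalFrom (xs p.1) u else xs p.1, ?_⟩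
      rintro ⟨V, b⟩ ⟨V', b'⟩ hg
      simp only at hg
      have key : ∀ (V : ↥(orbitOf A W)) (b : Bool),
          (if b then A.evalFrom (xs V) u else xs V) ∈ cyc A u (xs V) := by
        intro V b
        cases b
        · rw [if_neg (by simp)]; exact cyc_self A u (xs V)
        · rw [if_pos rfl]; exact hmem1 (xs V)
      have hVV : V = V' := by
        by_contra hne
        have h1 := key V b
        have h2 := key V' b'
        rw [hg] at h1
        have hcy : cyc A u (xs V') = cyc A u (xs V) := by
          have e1 := cyc_eq_of_mem A hperm h1
          have e2 := cyc_eq_of_mem A hperm h2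
          rw [← e1, ← e2]
        exact hne (Subtype.ext (by rw [hxs V, hxs V', hcy]))
      subst hVV
      have hbb : b = b' := by
        by_contra hne
        cases b
        · cases b'
          · exact hne rfl
          · rw [if_neg (by simp), if_pos rfl] at hg
            exact hmove (xs V) hg.symm
        · cases b'
          · rw [if_pos rfl, if_neg (by simp)] at hg
            exact hmove (xs V) hg
          · exact hne rfl
      rw [hbb]
    obtain ⟨g, hg⟩ := hinj
    have hcard : Nat.card (↥(orbitOf A W) × Bool) ≤ Nat.card Q :=
      Nat.card_le_card_of_injective g hg
    rw [Nat.card_prod] at hcard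
    have hb2 : Nat.card Bool = 2 := by simp
    rw [hb2] at hcard
    have hpos : 1 ≤ Nat.card ↥(orbitOf A W) := by
      have : Nonempty ↥(orbitOf A W) := ⟨⟨W, ⟨[], by simp [wordImage]⟩⟩⟩
      exact Nat.card_pos
    show Nat.card ↥(orbitOf A W) < Nat.card Q
    omega
  · -- language
    intro w
    constructor
    · intro hw B hB
      rw [List.mem_map] at hB
      obtain ⟨i, hi, rfl⟩ := hB
      show w ∈ (orbitDFA A (cyc A (us i) A.start)).accepts
      rw [orbit_accepts]
      refine ⟨A.evalFrom A.start w, ?_, by rwa [DFA.mem_accepts] at hw⟩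
      rw [wordImage_cyc A hcomm]
      exact cyc_self A _ _
    · intro hall
      by_contra hw
      rw [DFA.mem_accepts] at hw
      obtain ⟨i, hne, hrej⟩ := hcov (A.eval w) hw
      have hPi : P i := by
        intro hfix
        exact hne (fix_all A htrim hperm hcomm hfix (A.eval w))
      have hmem' : i ∈ s := by
        rw [hs, Finset.mem_filter]; exact ⟨Finset.mem_univ i, hPi⟩
      have hacc : w ∈ (orbitDFA A (cyc A (us i) A.start)).accepts :=
        hall (⟨↥(orbitOf A (cyc A (us i) A.start)), orbitDFA A (cyc A (us i) A.start)⟩ : FinDFA α)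
          (by rw [List.mem_map]; exact ⟨i, Finset.mem_toList.mpr hmem', rfl⟩)
      rw [orbit_accepts] at hacc
      obtain ⟨y, hy1, hy2⟩ := hacc
      rw [wordImage_cyc A hcomm] at hy1
      obtain ⟨t, ht⟩ := hy1
      exact hrej t (by rw [DFA.eval]; rwa [ht])
abbrev Xt (Q : Type) (l : List (FinDFA α)) : Type :=
  Q × ((i : Fin l.length) → (l.get i).σ)

def act (A : DFA α Q) (l : List (FinDFA α)) (w : List α) : Xt Q l → Xt Q l :=
  fun x => (A.evalFrom x.1 w, fun i => (l.get i).M.evalFrom (x.2 i) w)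

lemma act_app (l : List (FinDFA α)) (u v : List α) (x : Xt Q l) :
    act A l (u ++ v) x = act A l v (act A l u x) := by
  unfold act
  refine Prod.ext ?_ ?_
  · exact A.evalFrom_of_append _ _ _
  · funext i; exact (l.get i).M.evalFrom_of_append _ _ _

lemma act_wpow_add (l : List (FinDFA α)) (w : List α) (a b : ℕ) (x : Xt Q l) :
    act A l (wpow w (a + b)) x = act A l (wpow w b) (act A l (wpow w a) x) := by
  rw [wpow_add]; exact act_app A l _ _ x

lemma act_idem (l : List (FinDFA α)) (w : List α) :
    ∃ t : ℕ, 1 ≤ t ∧ act A l (wpow w (t + t)) = act A l (wpow w t) := by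
  obtain ⟨a, b, hab, heq⟩ :=
    Finite.exists_ne_map_eq_of_infinite (fun t : ℕ => act A l (wpow w t))
  wlog hlt : a < b generalizing a b
  · exact this b a hab.symm heq.symm (by omega)
  have shift : ∀ s, a ≤ s → act A l (wpow w (s + (b - a))) = act A l (wpow w s) := by
    intro s hs
    funext x
    have e1 : s + (b - a) = b + (s - a) := by omega
    have e2 : s = a + (s - a) := by omega
    rw [e1, Nat.add_comm b (s - a), act_wpow_add, ← heq]
    conv_rhs => rw [e2, Nat.add_comm a (s - a), act_wpow_add]
  have hca : a + 1 ≤ (b - a) * (a + 1) := Nat.le_mul_of_pos_left (a + 1) (by omega)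
  refine ⟨(b - a) * (a + 1), le_trans (by omega) hca, ?_⟩
  have red : ∀ r : ℕ, act A l (wpow w ((b - a) * (a + 1) + r * (b - a)))
      = act A l (wpow w ((b - a) * (a + 1))) := by
    intro r
    induction r with
    | zero => simp
    | succ n ih =>
        have e : (b - a) * (a + 1) + (n + 1) * (b - a)
            = ((b - a) * (a + 1) + n * (b - a)) + (b - a) := by ring
        rw [e, shift _ (le_trans (le_trans (Nat.le_succ a) hca) (Nat.le_add_right _ _)), ih]
  have e : (b - a) * (a + 1) + (b - a) * (a + 1)
      = (b - a) * (a + 1) + (a + 1) * (b - a) := by ring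
  rw [e, red (a + 1)]

lemma act_fst (l : List (FinDFA α)) {u v : List α} (h : act A l u = act A l v) (q : Q) :
    A.evalFrom q u = A.evalFrom q v :=
  congrArg Prod.fst (congrFun h (q, fun j => (l.get j).M.start))

lemma act_snd (l : List (FinDFA α)) {u v : List α} (h : act A l u = act A l v)
    (i : Fin l.length) (st : (l.get i).σ) :
    (l.get i).M.evalFrom st u = (l.get i).M.evalFrom st v := by
  classical
  have h2 := congrArg (fun y : Xt Q l => y.2 i)
    (congrFun h (A.start, Function.update (fun j => (l.get j).M.start) i st))
  simpa [act, Function.update_self] using h2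

lemma dir2 (htrim : Trim A) (hperm : IsPermutationDFA A) (hcomm : CommutativeDFA A)
    {k : ℕ} (hcomp : IsKFactorComposite A k) :
    ∃ us : Fin k → List α, ∀ q : Q, q ∉ A.accept → ∃ i : Fin k, WordCovers A (us i) q := by
  classical
  obtain ⟨l, hlen, hsize, hlang⟩ := hcomp
  choose xw hxw using htrim
  have hxw' : ∀ q : Q, A.evalFrom A.start (xw q) = q := hxw
  set Wt : List α → ℕ := fun W => ∑ j : Fin l.length,
    (Set.range fun st : (l.get j).σ => (l.get j).M.evalFrom st W).ncard with hWt
  have hne : {n : ℕ | ∃ W : List α, act A l (W ++ W) = act A l W ∧ Wt W = n}.Nonempty :=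
    ⟨Wt [], [], rfl, rfl⟩
  obtain ⟨Z, hZE, hZW⟩ := Nat.sInf_mem hne
  have hmin : ∀ W : List α, act A l (W ++ W) = act A l W → Wt Z ≤ Wt W := by
    intro W hW
    rw [hZW]
    exact Nat.sInf_le ⟨W, hW, rfl⟩
  have EsA : ∀ W : List α, act A l (W ++ W) = act A l W → ∀ q : Q, A.evalFrom q W = q := by
    intro W hW q
    have h2 := act_fst A l hW q
    rw [A.evalFrom_of_append] at h2
    exact (ev_bij A hperm W).injective h2
  have ZA : ∀ q : Q, A.evalFrom q Z = q := EsA Z hZE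
  have ZColl : ∀ (w : List α) (s : ℕ) (p : Q),
      A.evalFrom p (wpow (w ++ Z) s) = A.evalFrom p (wpow w s) := by
    intro w s
    induction s with
    | zero => intro p; rfl
    | succ n ih =>
        intro p
        show A.evalFrom p ((w ++ Z) ++ wpow (w ++ Z) n) = A.evalFrom p (w ++ wpow w n)
        rw [A.evalFrom_of_append, A.evalFrom_of_append, A.evalFrom_of_append, ZA, ih]
  have exV : ∀ i : Fin l.length, ∃ v : List α,
      ((l.get i).M.evalFrom ((l.get i).M.evalFrom (l.get i).M.start Z) (v ++ Z)
          = (l.get i).M.evalFrom (l.get i).M.start Z)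
      ∧ ∀ q : Q, A.evalFrom q v ≠ q := by
    intro i
    set D := (l.get i).M with hD
    set b := D.evalFrom D.start Z with hb
    have hIle : Nat.card ↥(Set.range fun st : (l.get i).σ => D.evalFrom st Z)
        ≤ Nat.card (l.get i).σ :=
      Nat.card_le_card_of_injective Subtype.val Subtype.val_injective
    have hBl : l.get i ∈ l := List.get_mem l i
    have hIlt : Nat.card ↥(Set.range fun st : (l.get i).σ => D.evalFrom st Z)
        < Nat.card Q := lt_of_le_of_lt hIle (hsize (l.get i) hBl)
    have hnotinj : ¬ Function.Injective
        (fun q : Q => (⟨D.evalFrom b (xw q ++ Z),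
          ⟨D.evalFrom b (xw q), (D.evalFrom_of_append _ _ _).symm⟩⟩ :
          ↥(Set.range fun st : (l.get i).σ => D.evalFrom st Z))) := by
      intro hinj
      exact absurd (Nat.card_le_card_of_injective _ hinj) (not_le.mpr hIlt)
    obtain ⟨q1, q2, hcol', hq12⟩ := Function.not_injective_iff.mp hnotinj
    have hcol : D.evalFrom b (xw q1 ++ Z) = D.evalFrom b (xw q2 ++ Z) :=
      congrArg Subtype.val hcol'
    set c := xw q1 with hc
    set d := xw q2 with hd
    obtain ⟨t, ht1, htI⟩ := act_idem A l (c ++ Z)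
    obtain ⟨t', rfl⟩ : ∃ t', t = t' + 1 := ⟨t - 1, by omega⟩
    set Y := wpow (c ++ Z) (t' + 1) with hY
    have hYE : act A l (Y ++ Y) = act A l Y := by
      rw [hY, ← wpow_add]
      exact htI
    have hsub : ∀ j : Fin l.length,
        (Set.range fun st : (l.get j).σ => (l.get j).M.evalFrom st Y)
          ⊆ (Set.range fun st : (l.get j).σ => (l.get j).M.evalFrom st Z) := by
      intro j y hy
      obtain ⟨st, rfl⟩ := hy
      show (l.get j).M.evalFrom st Y ∈ _
      rw [hY, wpow_succ', ← List.append_assoc, (l.get j).M.evalFrom_of_append]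
      exact ⟨_, rfl⟩
    have hle : ∀ j ∈ (Finset.univ : Finset (Fin l.length)),
        (Set.range fun st : (l.get j).σ => (l.get j).M.evalFrom st Y).ncard
          ≤ (Set.range fun st : (l.get j).σ => (l.get j).M.evalFrom st Z).ncard :=
      fun j _ => Set.ncard_le_ncard (hsub j) (Set.toFinite _)
    have hEq : Wt Y = Wt Z := le_antisymm (Finset.sum_le_sum hle) (hmin Y hYE)
    have hcards : (Set.range fun st : (l.get i).σ => D.evalFrom st Y).ncard
        = (Set.range fun st : (l.get i).σ => D.evalFrom st Z).ncard := by
      have h2 : (∑ j : Fin l.length,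
          (Set.range fun st : (l.get j).σ => (l.get j).M.evalFrom st Y).ncard)
          = ∑ j : Fin l.length,
          (Set.range fun st : (l.get j).σ => (l.get j).M.evalFrom st Z).ncard := hEq
      exact (Finset.sum_eq_sum_iff_of_le hle).mp h2 i (Finset.mem_univ i)
    have hranges : (Set.range fun st : (l.get i).σ => D.evalFrom st Y)
        = (Set.range fun st : (l.get i).σ => D.evalFrom st Z) :=
      Set.eq_of_subset_of_ncard_le (hsub i) (le_of_eq hcards.symm) (Set.toFinite _)
    have hYid : ∀ p : (l.get i).σ,
        p ∈ (Set.range fun st : (l.get i).σ => D.evalFrom st Z) →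
        D.evalFrom p Y = p := by
      intro p hp
      rw [← hranges] at hp
      obtain ⟨x, rfl⟩ := hp
      have h2 := act_snd A l hYE i x
      rw [D.evalFrom_of_append] at h2
      exact h2
    refine ⟨d ++ (Z ++ wpow (c ++ Z) t'), ?_, ?_⟩
    · have e1 : (d ++ (Z ++ wpow (c ++ Z) t')) ++ Z
          = (d ++ Z) ++ (wpow (c ++ Z) t' ++ Z) := by
        simp [List.append_assoc]
      rw [e1, D.evalFrom_of_append, ← hcol, ← D.evalFrom_of_append]
      have e2 : (c ++ Z) ++ (wpow (c ++ Z) t' ++ Z) = Y ++ Z := by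
        rw [hY]
        show _ = ((c ++ Z) ++ wpow (c ++ Z) t') ++ Z
        simp [List.append_assoc]
      rw [e2, D.evalFrom_of_append, hYid b ⟨D.start, rfl⟩]
      have h3 := act_snd A l hZE i D.start
      rw [D.evalFrom_of_append] at h3
      exact h3
    · intro q hq
      have htr : Trim A := fun q => ⟨xw q, hxw q⟩
      have hall := fun p => fix_all A htr hperm hcomm hq p
      have hYA : ∀ p : Q, A.evalFrom p (wpow c (t' + 1)) = p := by
        intro p
        have h0 := EsA Y hYE p
        rw [hY, ZColl] at h0
        exact h0
      have hvp : ∀ p : Q, A.evalFrom (A.evalFrom p d) (wpow c t') = p := by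
        intro p
        have h0 := hall p
        rw [A.evalFrom_of_append, A.evalFrom_of_append, ZA, ZColl] at h0
        exact h0
      have hcp : ∀ p : Q, A.evalFrom (A.evalFrom p c) (wpow c t') = p := by
        intro p
        have h0 := hYA p
        rw [show wpow c (t' + 1) = c ++ wpow c t' from rfl, A.evalFrom_of_append] at h0
        exact h0
      have hdc : A.evalFrom A.start d = A.evalFrom A.start c :=
        (ev_bij A hperm (wpow c t')).injective (by rw [hvp, hcp])
      apply hq12
      rw [← hxw' q1, ← hxw' q2]
      exact hdc.symm
  choose V hV1 hV2 using exV
  refine ⟨fun j : Fin k => if h : (j : ℕ) < l.length then V ⟨j, h⟩ else [], ?_⟩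
  intro q hq
  have hw0 : (Z ++ (xw q ++ Z)) ∉ A.accepts := by
    rw [DFA.mem_accepts]
    show A.evalFrom A.start (Z ++ (xw q ++ Z)) ∉ A.accept
    rw [A.evalFrom_of_append, ZA, A.evalFrom_of_append, ZA, hxw' q]
    exact hq
  have hnotall : ¬ ∀ B ∈ l, (Z ++ (xw q ++ Z)) ∈ FinDFA.accepts B :=
    fun hc => hw0 ((hlang _).mpr hc)
  push_neg at hnotall
  obtain ⟨B, hBl, hBrej⟩ := hnotall
  obtain ⟨i, hi⟩ := List.mem_iff_get.mp hBl
  subst hi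
  have hik : (i : ℕ) < k := lt_of_lt_of_le i.2 hlen
  refine ⟨⟨i.1, hik⟩, ?_⟩
  have husi : (if h : ((⟨i.1, hik⟩ : Fin k) : ℕ) < l.length
      then V ⟨(⟨i.1, hik⟩ : Fin k), h⟩ else []) = V i := by
    rw [dif_pos (show ((⟨i.1, hik⟩ : Fin k) : ℕ) < l.length from i.2)]
  show WordCovers A (if h : ((⟨i.1, hik⟩ : Fin k) : ℕ) < l.length
      then V ⟨(⟨i.1, hik⟩ : Fin k), h⟩ else []) q
  rw [husi]
  constructor
  · exact fun h => hV2 i q h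
  · intro lam
    set v := V i with hv
    have bloop : ∀ r : ℕ, (l.get i).M.evalFrom ((l.get i).M.evalFrom (l.get i).M.start Z)
        (wpow (v ++ Z) r) = (l.get i).M.evalFrom (l.get i).M.start Z := by
      intro r
      induction r with
      | zero => rfl
      | succ n ih =>
          show (l.get i).M.evalFrom _ ((v ++ Z) ++ wpow (v ++ Z) n) = _
          rw [(l.get i).M.evalFrom_of_append, hV1 i, ih]
    set X := Z ++ (wpow (v ++ Z) lam ++ (xw q ++ Z)) with hX
    have hXrej : X ∉ A.accepts := by
      intro hacc
      apply hBrej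
      have hBacc := (hlang X).mp hacc (l.get i) hBl
      have hstates : (l.get i).M.evalFrom (l.get i).M.start X
          = (l.get i).M.evalFrom (l.get i).M.start (Z ++ (xw q ++ Z)) := by
        rw [hX, (l.get i).M.evalFrom_of_append, (l.get i).M.evalFrom_of_append, bloop lam,
          ← (l.get i).M.evalFrom_of_append]
      show (Z ++ (xw q ++ Z)) ∈ ((l.get i).M).accepts
      rw [DFA.mem_accepts]
      have hBacc' : (l.get i).M.evalFrom (l.get i).M.start X ∈ (l.get i).M.accept := hBacc
      show (l.get i).M.evalFrom (l.get i).M.start (Z ++ (xw q ++ Z)) ∈ (l.get i).M.accept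
      rw [← hstates]
      exact hBacc'
    have hXval : A.evalFrom A.start X = A.evalFrom q (wpow v lam) := by
      rw [hX, A.evalFrom_of_append, ZA, A.evalFrom_of_append, A.evalFrom_of_append, ZA,
        ZColl, ev_comm A hcomm, hxw' q]
    show A.evalFrom q (wpow v lam) ∉ A.accept
    rw [← hXval]
    intro hin
    exact hXrej (by rw [DFA.mem_accepts]; exact hin)

end KFC
/-- a trim commutative permutation DFA is `k`-factor composite iff there are
`k` words covering, together, all its rejecting states. -/
theorem kFactorComposite_iff_cover {α Q : Type} [Finite Q] (A : DFA α Q)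
    (htrim : Trim A) (hperm : IsPermutationDFA A) (hcomm : CommutativeDFA A) (k : ℕ) :
    IsKFactorComposite A k ↔
      ∃ us : Fin k → List α,
        ∀ q : Q, q ∉ A.accept → ∃ i : Fin k, WordCovers A (us i) q := by
  constructor
  · intro h
    exact KFC.dir2 A htrim hperm hcomm h
  · rintro ⟨us, hus⟩
    exact KFC.dir1 A htrim hperm hcomm us hus
end

section
/- For every m ≥ 1 and every prime n, the DFA A_n^m is (n−1)^{m−1}-factor composite. -/
open Set

/-- The DFA `A_n^m`: states are `m`-tuples over `ℤ/nℤ`, the letter `a_i` increments the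
`i`-th coordinate, the initial state is the zero tuple, and a state is accepting iff it has
at least one coordinate equal to `0` and at least one coordinate different from `0`. -/
def Anm (n m : ℕ) : DFA (Fin m) (Fin m → ZMod n) where
  step q i := Function.update q i (q i + 1)
  start := fun _ => 0
  accept := {q | (∃ i, q i = 0) ∧ ∃ j, q j ≠ 0}


/-- Auxiliary: the linear map whose kernel is the line spanned by `(1, t)`. -/
def phiAux (n m : ℕ) (t : Fin (m-1) → ZMod n) (c : Fin m → ZMod n) : Fin (m-1) → ZMod n :=
  fun j => c ⟨j.val + 1, by have := j.isLt; omega⟩ - t j * c ⟨0, by have := j.isLt; omega⟩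

/-- The factor DFA for parameter `t`. -/
def Bdfa (n m : ℕ) [NeZero n] (t : Fin (m-1) → ZMod n) : FinDFA (Fin m) where
  σ := Fin (m-1) → ZMod n
  fin := inferInstance
  M := { step := fun r a => fun j =>
           r j + ((if a.val = j.val + 1 then (1:ZMod n) else 0) - (if a.val = 0 then t j else 0)),
         start := fun _ => 0,
         accept := {r | ∃ c, phiAux n m t c = r ∧ c ∈ (Anm n m).accept} }

theorem evalA (n m : ℕ) (w : List (Fin m)) (q : Fin m → ZMod n) :
    (Anm n m).evalFrom q w = fun i => q i + (w.count i : ZMod n) := by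
  induction w generalizing q with
  | nil => funext i; simp [DFA.evalFrom]
  | cons a w ih =>
    have h1 : (Anm n m).evalFrom q (a :: w) = (Anm n m).evalFrom ((Anm n m).step q a) w := rfl
    rw [h1, ih]
    funext i
    by_cases hia : i = a <;>
      simp [Anm, Function.update_apply, hia, List.count_cons, @eq_comm _ a i] <;> push_cast <;> ring

theorem evalB (n m : ℕ) [NeZero n] (t : Fin (m-1) → ZMod n) (w : List (Fin m))
    (r : Fin (m-1) → ZMod n) :
    (Bdfa n m t).M.evalFrom r w = fun j => r j + phiAux n m t (fun i => (w.count i : ZMod n)) j := by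
  induction w generalizing r with
  | nil => funext j; simp [DFA.evalFrom, phiAux]; rfl
  | cons a w ih =>
    have h1 : (Bdfa n m t).M.evalFrom r (a :: w) = (Bdfa n m t).M.evalFrom ((Bdfa n m t).M.step r a) w := rfl
    erw [h1, ih]
    funext j
    have hj := j.isLt
    have e1 : (a = (⟨j.val + 1, by omega⟩ : Fin m)) ↔ a.val = j.val + 1 := by
      rw [Fin.ext_iff]
    have e2 : (a = (⟨0, by omega⟩ : Fin m)) ↔ a.val = 0 := by
      rw [Fin.ext_iff]
    by_cases h1 : a.val = j.val + 1 <;> by_cases h2 : a.val = 0 <;>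
      simp [Bdfa, phiAux, List.count_cons, e1, e2, h1, h2] <;> push_cast <;> ring

theorem keyLemma (n m : ℕ) [Fact n.Prime] (hm : 1 ≤ m)
    (t : Fin (m-1) → ZMod n) (ht : ∀ j, t j ≠ 0)
    (c' : Fin m → ZMod n) (h : phiAux n m t c' = 0) : c' ∉ (Anm n m).accept := by
  have h' : ∀ j : Fin (m-1), c' ⟨j.val + 1, by have := j.isLt; omega⟩ = t j * c' ⟨0, by omega⟩ := by
    intro j
    have := congrFun h j
    simp only [phiAux, Pi.zero_apply, sub_eq_zero] at this
    convert this using 3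
  have hcover : ∀ i : Fin m, i = (⟨0, by omega⟩ : Fin m) ∨
      ∃ j : Fin (m-1), i = ⟨j.val + 1, by have := j.isLt; omega⟩ := by
    intro i
    rcases Nat.eq_zero_or_pos i.val with h0 | h0
    · left; exact Fin.ext h0
    · right
      exact ⟨⟨i.val - 1, by have := i.isLt; omega⟩, Fin.ext (by simp; omega)⟩
  by_cases h0 : c' ⟨0, by omega⟩ = 0
  · have hall : ∀ i, c' i = 0 := by
      intro i
      rcases hcover i with h | ⟨j, hj⟩
      · rw [h]; exact h0
      · rw [hj, h', h0, mul_zero]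
    rintro ⟨-, j, hj⟩
    exact hj (hall j)
  · have hall : ∀ i, c' i ≠ 0 := by
      intro i
      rcases hcover i with h | ⟨j, hj⟩
      · rw [h]; exact h0
      · rw [hj, h']; exact mul_ne_zero (ht j) h0
    rintro ⟨⟨i, hi⟩, -⟩
    exact hall i hi

/-- for `m ≥ 1` and `n` prime, `A_n^m` is `(n-1)^(m-1)`-factor composite. -/
theorem Anm_kFactorComposite (n m : ℕ) (hm : 1 ≤ m) (hn : n.Prime) :
    IsKFactorComposite (Anm n m) ((n - 1) ^ (m - 1)) := by
  haveI : Fact n.Prime := ⟨hn⟩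
  haveI : NeZero n := ⟨hn.ne_zero⟩
  set l : List (FinDFA (Fin m)) :=
    (Finset.univ : Finset (Fin (m-1) → {x : ZMod n // x ≠ 0})).toList.map
      (fun t => Bdfa n m (fun j => (t j : ZMod n))) with hl
  refine ⟨l, ?_, ?_, ?_⟩
  · -- length
    rw [hl, List.length_map, Finset.length_toList, Finset.card_univ,
      Fintype.card_fun, Fintype.card_fin]
    have : Fintype.card {x : ZMod n // x ≠ 0} = n - 1 := by
      rw [Fintype.card_subtype_compl (· = 0), Fintype.card_subtype_eq, ZMod.card]
    rw [this]
  · -- size bound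
    intro B hB
    rw [hl, List.mem_map] at hB
    obtain ⟨t, -, rfl⟩ := hB
    show Nat.card (Fin (m-1) → ZMod n) < Nat.card (Fin m → ZMod n)
    rw [Nat.card_eq_fintype_card, Nat.card_eq_fintype_card, Fintype.card_fun, Fintype.card_fun,
      Fintype.card_fin, Fintype.card_fin, ZMod.card]
    exact Nat.pow_lt_pow_right hn.one_lt (by omega)
  · -- language equality
    intro w
    set c : Fin m → ZMod n := fun i => (w.count i : ZMod n) with hc
    have hevalA : (Anm n m).eval w = c := by
      rw [DFA.eval, evalA]; funext i; show (Anm n m).start i + _ = _; simp [Anm, hc]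
    have hevalB : ∀ t : Fin (m-1) → ZMod n, (Bdfa n m t).M.eval w = phiAux n m t c := by
      intro t
      erw [DFA.eval, evalB]; funext j; show (Bdfa n m t).M.start j + _ = _
      simp [Bdfa, hc]
    constructor
    · intro hw B hB
      rw [hl, List.mem_map] at hB
      obtain ⟨t, -, rfl⟩ := hB
      rw [DFA.mem_accepts, hevalA] at hw
      show w ∈ (Bdfa n m _).M.accepts
      rw [DFA.mem_accepts, hevalB]
      exact ⟨c, rfl, hw⟩
    · intro hB
      rw [DFA.mem_accepts, hevalA]
      by_contra hc'
      -- c is rejected by A; find a factor that also rejects w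
      have : ∃ t : Fin (m-1) → ZMod n, (∀ j, t j ≠ 0) ∧ phiAux n m t c = 0 := by
        by_cases hall : ∀ i, c i ≠ 0
        · refine ⟨fun j => c ⟨j.val + 1, by have := j.isLt; omega⟩ * (c ⟨0, by omega⟩)⁻¹,
            fun j => mul_ne_zero (hall _) (inv_ne_zero (hall _)), ?_⟩
          funext j
          have h0 : c ⟨0, by omega⟩ ≠ 0 := hall _
          simp only [phiAux, Pi.zero_apply, sub_eq_zero]
          rw [mul_assoc, inv_mul_cancel₀ h0, mul_one]
        · push_neg at hall
          obtain ⟨i, hi⟩ := hall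
          have hzero : ∀ j, c j = 0 := by
            by_contra hz
            push_neg at hz
            exact hc' ⟨⟨i, hi⟩, hz⟩
          refine ⟨fun _ => 1, fun _ => one_ne_zero, ?_⟩
          funext j
          simp [phiAux, hzero]
      obtain ⟨t, ht, hphi⟩ := this
      have hmem : Bdfa n m t ∈ l := by
        rw [hl, List.mem_map]
        refine ⟨fun j => ⟨t j, ht j⟩, by simp, rfl⟩
      have := hB _ hmem
      rw [show (Bdfa n m t).accepts = (Bdfa n m t).M.accepts from rfl,
        DFA.mem_accepts, hevalB, hphi] at this
      obtain ⟨c', hc'eq, hc'acc⟩ := this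
      exact keyLemma n m hm t ht c' hc'eq hc'acc
end

section
/- For every m ≥ 1 and every prime n, the DFA A_n^m is not ((n−1)^{m−1}−1)-factor composite. -/
open Set

namespace AnmPf

variable {n m : ℕ}

/-- The letter-count vector of a word, in `(ZMod n)^m`. -/
def cnt (n : ℕ) {m : ℕ} (w : List (Fin m)) : Fin m → ZMod n := fun j => (w.count j : ZMod n)

lemma cnt_nil : cnt n ([] : List (Fin m)) = 0 := by
  funext j; simp [cnt]

lemma cnt_append (u v : List (Fin m)) : cnt n (u ++ v) = cnt n u + cnt n v := by
  funext j; simp [cnt, List.count_append]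

lemma cnt_cons (a : Fin m) (w : List (Fin m)) : cnt n (a :: w) = cnt n [a] + cnt n w := by
  have : a :: w = [a] ++ w := rfl
  rw [this, cnt_append]

lemma cnt_flatten_replicate (t : ℕ) (w : List (Fin m)) :
    cnt n ((List.replicate t w).flatten) = t • cnt n w := by
  induction t with
  | zero => simp [cnt_nil]
  | succ t ih =>
      rw [List.replicate_succ, List.flatten_cons, cnt_append, ih, succ_nsmul, add_comm]

lemma Anm_evalFrom (q : Fin m → ZMod n) (w : List (Fin m)) :
    (Anm n m).evalFrom q w = q + cnt n w := by
  induction w generalizing q with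
  | nil => simp [cnt_nil]
  | cons a w ih =>
      have h1 : (Anm n m).evalFrom q (a :: w) = (Anm n m).evalFrom ((Anm n m).step q a) w := rfl
      rw [h1, ih]
      funext j
      rcases eq_or_ne j a with h | h
      · subst h
        simp [Anm, cnt, List.count_cons, Function.update_apply, Pi.add_apply]
        push_cast
        ring
      · simp [Anm, cnt, List.count_cons, Function.update_apply, Pi.add_apply, h,
          (by exact fun hh => h hh.symm : ¬ a = j)]
        exact fun hh => absurd hh.symm h

lemma Anm_eval (w : List (Fin m)) : (Anm n m).eval w = cnt n w := by
  show (Anm n m).evalFrom (Anm n m).start w = cnt n w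
  rw [Anm_evalFrom]
  funext j
  show (0 : ZMod n) + cnt n w j = cnt n w j
  rw [zero_add]

lemma mem_Anm_accepts {w : List (Fin m)} :
    w ∈ (Anm n m).accepts ↔ ((∃ i, cnt n w i = 0) ∧ ∃ j, cnt n w j ≠ 0) := by
  rw [DFA.mem_accepts, Anm_eval]
  rfl

/-- canonical word with count vector `v` -/
def wrd {n m : ℕ} (v : Fin m → ZMod n) : List (Fin m) :=
  (List.finRange m).flatMap fun j => List.replicate (v j).val j

lemma count_wrd [NeZero n] (v : Fin m → ZMod n) (j : Fin m) :
    (wrd v).count j = (v j).val := by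
  rw [wrd, List.count_flatMap]
  have : ((List.finRange m).map (List.count j ∘ fun x => List.replicate (v x).val x)).sum
      = ∑ x : Fin m, (if x = j then (v x).val else 0) := by
    rw [Fin.sum_univ_def]
    congr 1
    apply List.map_congr_left
    intro x _
    simp [List.count_replicate]
  rw [this, Finset.sum_ite_eq' Finset.univ j (fun x => (v x).val)]
  simp

lemma cnt_wrd [NeZero n] (v : Fin m → ZMod n) : cnt n (wrd v) = v := by
  funext j
  simp [cnt, count_wrd, ZMod.natCast_val, ZMod.cast_id]

end AnmPf

namespace AnmPf2
open AnmPf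

variable {n m : ℕ}

def Fw {m : ℕ} (B : FinDFA (Fin m)) (w : List (Fin m)) : B.σ → B.σ :=
  fun s => B.M.evalFrom s w

lemma Fw_append (B : FinDFA (Fin m)) (u v : List (Fin m)) :
    Fw B (u ++ v) = Fw B v ∘ Fw B u := by
  funext s
  exact B.M.evalFrom_of_append s u v

lemma Fw_flatten_replicate (B : FinDFA (Fin m)) (t : ℕ) (w : List (Fin m)) :
    Fw B ((List.replicate t w).flatten) = (Fw B w)^[t] := by
  induction t with
  | zero => rfl
  | succ t ih => rw [List.replicate_succ, List.flatten_cons, Fw_append, ih,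
      Function.iterate_succ]

noncomputable def rk {m : ℕ} (l : List (FinDFA (Fin m))) (w : List (Fin m)) : ℕ :=
  ∑ i : Fin l.length, (Set.range (Fw (l.get i) w)).ncard

/-- key combinatorial choice: a count-zero word `z` such that for every factor and
every letter `j`, the map `s ↦ δ(δ(s,j),z)` is surjective on the range of `δ(·,z)`. -/
lemma exists_z [NeZero n] (hn2 : 2 ≤ n) (l : List (FinDFA (Fin m))) :
    ∃ z : List (Fin m), cnt n z = 0 ∧ ∀ B ∈ l, ∀ j : Fin m,
      Set.SurjOn (fun s => B.M.evalFrom (B.M.step s j) z)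
        (Set.range (Fw B z)) (Set.range (Fw B z)) := by
  classical
  set S : Set ℕ := {r | ∃ w : List (Fin m), cnt n w = 0 ∧ rk l w = r} with hS
  have hne : S.Nonempty := ⟨rk l [], [], cnt_nil, rfl⟩
  obtain ⟨z, hz0, hzr⟩ : ∃ w, cnt n w = 0 ∧ rk l w = sInf S := Nat.sInf_mem hne
  refine ⟨z, hz0, ?_⟩
  intro B hB j
  obtain ⟨i, hi⟩ := List.mem_iff_get.mp hB
  set y : List (Fin m) := z ++ (j :: z) with hy
  set Y : List (Fin m) := (List.replicate n y).flatten with hY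
  have hcnty : cnt n Y = 0 := by
    rw [hY, cnt_flatten_replicate]
    have h2 : cnt n y = cnt n [j] := by
      rw [hy, cnt_append, cnt_cons, hz0]
      simp
    rw [h2, ← Nat.cast_smul_eq_nsmul (ZMod n), ZMod.natCast_self, zero_smul]
  have hFwy : ∀ (C : FinDFA (Fin m)), Fw C y = fun s => Fw C z (C.M.step (Fw C z s) j) := by
    intro C
    funext s
    rw [hy, Fw_append]
    simp only [Function.comp_apply]
    rfl
  have hFY : ∀ (C : FinDFA (Fin m)), Fw C Y = (Fw C y)^[n] := fun C => Fw_flatten_replicate C n y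
  obtain ⟨k, hk⟩ : ∃ k, n = k + 1 := ⟨n - 1, by omega⟩
  have hsub : ∀ (C : FinDFA (Fin m)), Set.range (Fw C Y) ⊆ Set.range (Fw C z) := by
    intro C x hx
    obtain ⟨s, hs⟩ := hx
    rw [hFY, hk, Function.iterate_succ_apply'] at hs
    rw [hFwy C] at hs
    exact ⟨_, hs⟩
  have hmin : rk l z ≤ rk l Y := by
    rw [hzr]
    exact Nat.sInf_le ⟨Y, hcnty, rfl⟩
  have hpt : ∀ i' : Fin l.length,
      (Set.range (Fw (l.get i') Y)).ncard ≤ (Set.range (Fw (l.get i') z)).ncard := by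
    intro i'
    exact Set.ncard_le_ncard (hsub _) (Set.toFinite _)
  have hsumeq : ∀ i' : Fin l.length,
      (Set.range (Fw (l.get i') z)).ncard ≤ (Set.range (Fw (l.get i') Y)).ncard := by
    have hle : rk l Y ≤ rk l z := Finset.sum_le_sum (fun i' _ => hpt i')
    have heq : rk l Y = rk l z := le_antisymm hle hmin
    intro i'
    by_contra hne'
    push_neg at hne'
    have hlt2 : rk l Y < rk l z :=
      Finset.sum_lt_sum (fun i'' _ => hpt i'') ⟨i', Finset.mem_univ _, hne'⟩
    omega
  have hrangeeq : Set.range (Fw B Y) = Set.range (Fw B z) := by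
    apply Set.eq_of_subset_of_ncard_le (hsub B)
    rw [← hi]; exact hsumeq i
  intro x hx
  rw [← hrangeeq] at hx
  obtain ⟨s, hs⟩ := hx
  rw [hFY, hk, Function.iterate_succ_apply'] at hs
  set u' := (Fw B y)^[k] s with hu'
  have hs2 : Fw B z (B.M.step (Fw B z u') j) = x := by
    rw [← hs, hFwy]
  exact ⟨Fw B z u', ⟨u', rfl⟩, hs2⟩



variable {n m : ℕ}

/-- interleave `z` into a block word -/
def tau (z b : List (Fin m)) : List (Fin m) :=
  z ++ b.flatMap (fun j => j :: z)

lemma cnt_flatMap_cons {z : List (Fin m)} (hz : cnt n z = 0) (b : List (Fin m)) :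
    cnt n (b.flatMap fun j => j :: z) = cnt n b := by
  induction b with
  | nil => simp
  | cons j b ih =>
      rw [List.flatMap_cons, cnt_append, cnt_cons j z, hz, add_zero, ih]
      exact (cnt_cons j b).symm

lemma cnt_tau {z : List (Fin m)} (hz : cnt n z = 0) (b : List (Fin m)) :
    cnt n (tau z b) = cnt n b := by
  rw [tau, cnt_append, hz, zero_add, cnt_flatMap_cons hz]

lemma factor_line [NeZero n] (B : FinDFA (Fin m)) (z : List (Fin m))
    (hz0 : cnt n z = 0)
    (hsurj : ∀ j : Fin m, Set.SurjOn (fun s => B.M.evalFrom (B.M.step s j) z)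
        (Set.range (Fw B z)) (Set.range (Fw B z)))
    (hcard : Nat.card B.σ < n ^ m) :
    ∃ h₀ : Fin m → ZMod n, h₀ ≠ 0 ∧ ∀ (v : Fin m → ZMod n) (t : ℕ),
      B.M.eval (tau z (wrd v)) ∉ B.M.accept →
      ∃ w : List (Fin m), B.M.eval w ∉ B.M.accept ∧ cnt n w = v + t • h₀ := by
  classical
  haveI : Fintype B.σ := Fintype.ofFinite _
  set r : Set B.σ := Set.range (Fw B z) with hr
  have hmap : ∀ j : Fin m, Set.MapsTo (fun s => B.M.evalFrom (B.M.step s j) z) r r := by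
    intro j s _
    exact ⟨_, rfl⟩
  have hbij : ∀ j : Fin m, Function.Bijective ((hmap j).restrict _ r r) := by
    intro j
    have hsurj' : Function.Surjective ((hmap j).restrict _ r r) := by
      rintro ⟨x, hx⟩
      obtain ⟨u, hu, hux⟩ := hsurj j hx
      exact ⟨⟨u, hu⟩, Subtype.ext hux⟩
    exact ⟨Finite.injective_iff_surjective.mpr hsurj', hsurj'⟩
  set g : Fin m → Equiv.Perm ↥r := fun j => Equiv.ofBijective _ (hbij j) with hgdef
  set Gw : List (Fin m) → Equiv.Perm ↥r := fun b => b.foldl (fun acc j => (g j) * acc) 1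
    with hGw
  have hfold : ∀ (b : List (Fin m)) (acc : Equiv.Perm ↥r),
      b.foldl (fun acc j => (g j) * acc) acc = Gw b * acc := by
    intro b
    induction b with
    | nil => intro acc; simp [hGw]
    | cons j b ih =>
        intro acc
        rw [List.foldl_cons, ih]
        have h4 : Gw (j :: b) = Gw b * g j := by
          show List.foldl _ 1 (j :: b) = _
          rw [List.foldl_cons, ih, mul_one]
        rw [h4, mul_assoc]
  have hGwcons : ∀ (j : Fin m) (b : List (Fin m)), Gw (j :: b) = Gw b * g j := by
    intro j b
    show List.foldl _ 1 (j :: b) = _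
    rw [List.foldl_cons, hfold, mul_one]
  have hGwappend : ∀ b c : List (Fin m), Gw (b ++ c) = Gw c * Gw b := by
    intro b c
    show List.foldl _ 1 (b ++ c) = _
    rw [List.foldl_append, hfold]
  have hGwpow : ∀ (t : ℕ) (b : List (Fin m)), Gw ((List.replicate t b).flatten) = (Gw b) ^ t := by
    intro t b
    induction t with
    | zero =>
        simp only [List.replicate_zero, List.flatten_nil, pow_zero]
        rfl
    | succ t ih => rw [List.replicate_succ, List.flatten_cons, hGwappend, ih, pow_succ]
  have hcorr : ∀ (b : List (Fin m)) (s : ↥r),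
      ((Gw b s : B.σ)) = B.M.evalFrom (s : B.σ) (b.flatMap fun j => j :: z) := by
    intro b
    induction b with
    | nil => intro s; simp [hGw]
    | cons j b ih =>
        intro s
        rw [hGwcons, List.flatMap_cons, DFA.evalFrom_of_append]
        have h3 : B.M.evalFrom (s : B.σ) (j :: z) = ((g j s : B.σ)) := rfl
        rw [h3, Equiv.Perm.mul_apply]
        exact ih (g j s)
  set s0 : ↥r := ⟨Fw B z B.M.start, ⟨_, rfl⟩⟩ with hs0
  have heval : ∀ b : List (Fin m), B.M.eval (tau z b) = ((Gw b s0 : B.σ)) := by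
    intro b
    show B.M.evalFrom B.M.start (z ++ _) = _
    rw [DFA.evalFrom_of_append]
    exact (hcorr b s0).symm
  have hcards : Fintype.card ↥r < Fintype.card (Fin m → ZMod n) := by
    have h1 : Fintype.card ↥r ≤ Fintype.card B.σ :=
      Fintype.card_le_of_injective _ Subtype.val_injective
    have h2 : Fintype.card B.σ = Nat.card B.σ := Nat.card_eq_fintype_card.symm
    have h3 : Fintype.card (Fin m → ZMod n) = n ^ m := by
      rw [Fintype.card_fun, ZMod.card, Fintype.card_fin]
    omega
  obtain ⟨v₁, v₂, hv12, hPhi⟩ :=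
    Fintype.exists_ne_map_eq_of_card_lt (fun v : Fin m → ZMod n => Gw (wrd v) s0) hcards
  -- beta ok
  refine ⟨v₁ - v₂, sub_ne_zero.mpr hv12, ?_⟩
  set π := Gw (wrd v₂) with hπ
  have hd1 : 1 ≤ orderOf π := orderOf_pos π
  set N := orderOf π * n with hN
  have hnpos : 0 < n := Nat.pos_of_ne_zero (NeZero.ne n)
  have hN1 : 1 ≤ N := Nat.one_le_iff_ne_zero.mpr (by positivity)
  set b₀ : List (Fin m) := wrd v₁ ++ (List.replicate (N - 1) (wrd v₂)).flatten with hb₀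
  have hfix : Gw b₀ s0 = s0 := by
    rw [hb₀, hGwappend, hGwpow, Equiv.Perm.mul_apply, hPhi,
        ← Equiv.Perm.mul_apply, ← pow_succ]
    have h6 : N - 1 + 1 = N := by omega
    rw [h6, hN, pow_mul, pow_orderOf_eq_one, one_pow]
    rfl
  have hcntb₀ : cnt n b₀ = v₁ - v₂ := by
    rw [hb₀, cnt_append, cnt_flatten_replicate, cnt_wrd, cnt_wrd]
    have h7 : ((N - 1 : ℕ)) • v₂ = -v₂ := by
      rw [← Nat.cast_smul_eq_nsmul (ZMod n)]
      have h8 : ((N - 1 : ℕ) : ZMod n) = -1 := by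
        rw [Nat.cast_sub hN1, hN]
        push_cast
        simp [ZMod.natCast_self]
      rw [h8, neg_one_smul]
    rw [h7]
    abel
  intro v t hrej
  refine ⟨tau z ((List.replicate t b₀).flatten ++ wrd v), ?_, ?_⟩
  · rw [heval, hGwappend, hGwpow, Equiv.Perm.mul_apply]
    have hfixt : (Gw b₀ ^ t) s0 = s0 := by
      induction t with
      | zero => rfl
      | succ t ih => rw [pow_succ, Equiv.Perm.mul_apply, hfix, ih]
    rw [hfixt, ← heval]
    exact hrej
  · rw [cnt_tau hz0, cnt_append, cnt_flatten_replicate, cnt_wrd, hcntb₀, add_comm]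

end AnmPf2

/-- for `m ≥ 1` and `n` prime, `A_n^m` is not
`((n-1)^(m-1) - 1)`-factor composite. -/
theorem Anm_not_kFactorComposite (n m : ℕ) (hm : 1 ≤ m) (hn : n.Prime) :
    ¬ IsKFactorComposite (Anm n m) ((n - 1) ^ (m - 1) - 1) := by
  classical
  rintro ⟨l, hlen, hsmall, hiff⟩
  haveI : Fact n.Prime := ⟨hn⟩
  haveI : NeZero n := ⟨hn.ne_zero⟩
  have hn2 : 2 ≤ n := hn.two_le
  have hcardQ : Nat.card (Fin m → ZMod n) = n ^ m := by
    rw [Nat.card_eq_fintype_card, Fintype.card_fun, ZMod.card, Fintype.card_fin]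
  obtain ⟨z, hz0, hzsurj⟩ := AnmPf2.exists_z (n := n) hn2 l
  have hline : ∀ i : Fin l.length, ∃ h₀ : Fin m → ZMod n, h₀ ≠ 0 ∧
      ∀ (v : Fin m → ZMod n) (t : ℕ),
        (l.get i).M.eval (AnmPf2.tau z (AnmPf.wrd v)) ∉ (l.get i).M.accept →
        ∃ w, (l.get i).M.eval w ∉ (l.get i).M.accept ∧ AnmPf.cnt n w = v + t • h₀ := by
    intro i
    apply AnmPf2.factor_line _ _ hz0 (hzsurj _ (l.get_mem ..))
    have h9 := hsmall (l.get i) (l.get_mem ..)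
    rwa [hcardQ] at h9
  choose h₀ hne hrej using hline
  have hkey : ∀ (i : Fin l.length) (w : List (Fin m)),
      (l.get i).M.eval w ∉ (l.get i).M.accept →
      ¬ ((∃ a, AnmPf.cnt n w a = 0) ∧ ∃ b, AnmPf.cnt n w b ≠ 0) := by
    intro i w hw hmix
    have h1 : w ∈ (Anm n m).accepts := AnmPf.mem_Anm_accepts.mpr hmix
    have h2 := (hiff w).mp h1 (l.get i) (l.get_mem ..)
    exact hw ((DFA.mem_accepts _).mp h2)
  have hcover : ∀ v : Fin m → ZMod n, (∀ a, v a ≠ 0) →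
      ∃ i : Fin l.length, (l.get i).M.eval (AnmPf2.tau z (AnmPf.wrd v)) ∉ (l.get i).M.accept := by
    intro v hv
    have hnm : AnmPf2.tau z (AnmPf.wrd v) ∉ (Anm n m).accepts := by
      rw [AnmPf.mem_Anm_accepts, AnmPf2.cnt_tau hz0, AnmPf.cnt_wrd]
      rintro ⟨⟨a, ha⟩, -⟩
      exact hv a ha
    by_contra hcon
    push_neg at hcon
    apply hnm
    rw [hiff]
    intro B hB
    obtain ⟨i, hi⟩ := List.mem_iff_get.mp hB
    rw [← hi]
    exact (DFA.mem_accepts _).mpr (hcon i)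
  have hscal : ∀ v : Fin m → ZMod n, (∀ a, v a ≠ 0) →
      ∃ (i : Fin l.length) (c : ZMod n), c ≠ 0 ∧ v = c • h₀ i := by
    intro v hv
    obtain ⟨i, hrejv⟩ := hcover v hv
    have hnonmix : ∀ c : ZMod n,
        ¬ ((∃ a, (v + c • h₀ i) a = 0) ∧ ∃ b, (v + c • h₀ i) b ≠ 0) := by
      intro c
      obtain ⟨w, hwrej, hwcnt⟩ := hrej i v (c.val) hrejv
      have h3 : AnmPf.cnt n w = v + c • h₀ i := by
        rw [hwcnt, ← Nat.cast_smul_eq_nsmul (ZMod n), ZMod.natCast_val, ZMod.cast_id]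
      rw [← h3]
      exact hkey i w hwrej
    have hallnz : ∀ a, h₀ i a ≠ 0 := by
      intro a ha
      obtain ⟨b, hb⟩ := Function.ne_iff.mp (hne i)
      have hb' : h₀ i b ≠ 0 := hb
      apply hnonmix (-(v b) * (h₀ i b)⁻¹)
      constructor
      · refine ⟨b, ?_⟩
        simp only [Pi.add_apply, Pi.smul_apply, smul_eq_mul]
        field_simp
        ring
      · refine ⟨a, ?_⟩
        simp only [Pi.add_apply, Pi.smul_apply, smul_eq_mul, ha, mul_zero, add_zero]
        exact hv a
    set a₀ : Fin m := ⟨0, hm⟩ with ha₀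
    set c := -(v a₀) * (h₀ i a₀)⁻¹ with hc
    have hza : (v + c • h₀ i) a₀ = 0 := by
      simp only [Pi.add_apply, Pi.smul_apply, smul_eq_mul, hc]
      field_simp [hallnz a₀]
      ring
    have hcall : ∀ b, (v + c • h₀ i) b = 0 := by
      by_contra hcon
      push_neg at hcon
      obtain ⟨b, hb⟩ := hcon
      exact hnonmix c ⟨⟨a₀, hza⟩, ⟨b, hb⟩⟩
    have hveq : v = (-c) • h₀ i := by
      funext b
      have h5 := hcall b
      simp only [Pi.add_apply, Pi.smul_apply, smul_eq_mul] at h5 ⊢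
      linear_combination h5
    refine ⟨i, -c, ?_, hveq⟩
    intro h0c
    rw [h0c, zero_smul] at hveq
    exact hv a₀ (congrFun hveq a₀)
  -- counting
  have hscal' : ∀ v : {v : Fin m → ZMod n // ∀ a, v a ≠ 0},
      ∃ (i : Fin l.length) (c : ZMod n), c ≠ 0 ∧ v.1 = c • h₀ i := fun v => hscal v.1 v.2
  choose idx cc hcc hvc using hscal'
  have hΦinj : Function.Injective (fun v : {v : Fin m → ZMod n // ∀ a, v a ≠ 0} =>
      ((idx v, ⟨cc v, hcc v⟩) : Fin l.length × {c : ZMod n // c ≠ 0})) := by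
    intro v v' hvv
    simp only [Prod.mk.injEq, Subtype.mk.injEq] at hvv
    apply Subtype.ext
    rw [hvc v, hvc v', hvv.1, hvv.2]
  have cne : Fintype.card {c : ZMod n // c ≠ 0} = n - 1 := by
    have h6 := Fintype.card_subtype_compl (fun x : ZMod n => x = 0)
    rw [ZMod.card, Fintype.card_subtype_eq] at h6
    convert h6 using 2
  have c1 : Fintype.card {v : Fin m → ZMod n // ∀ a, v a ≠ 0} = (n - 1) ^ m := by
    have e : {v : Fin m → ZMod n // ∀ a, v a ≠ 0} ≃ (Fin m → {x : ZMod n // x ≠ 0}) :=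
      { toFun := fun v a => ⟨v.1 a, v.2 a⟩
        invFun := fun f => ⟨fun a => (f a).1, fun a => (f a).2⟩
        left_inv := fun v => rfl
        right_inv := fun f => rfl }
    rw [Fintype.card_congr e, Fintype.card_fun, Fintype.card_fin, cne]
  have c2 : Fintype.card (Fin l.length × {c : ZMod n // c ≠ 0}) = l.length * (n - 1) := by
    rw [Fintype.card_prod, Fintype.card_fin, cne]
  have hle := Fintype.card_le_of_injective _ hΦinj
  rw [c1, c2] at hle
  clear c1 c2 cne
  have hK : 1 ≤ (n - 1) ^ (m - 1) := Nat.one_le_pow _ _ (by omega)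
  have hpow : (n - 1) ^ m = (n - 1) ^ (m - 1) * (n - 1) := by
    conv_lhs => rw [show m = (m - 1) + 1 by omega]
    rw [pow_succ]
  have hle2 : l.length * (n - 1) ≤ ((n - 1) ^ (m - 1) - 1) * (n - 1) :=
    Nat.mul_le_mul_right _ hlen
  have hexp : ((n - 1) ^ (m - 1) - 1) * (n - 1) = (n - 1) ^ (m - 1) * (n - 1) - (n - 1) := by
    rw [Nat.sub_mul, one_mul]
  have hge : (n - 1) ≤ (n - 1) ^ (m - 1) * (n - 1) := Nat.le_mul_of_pos_left _ hK
  omega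
end

section
/- For every m ≥ 1 and every prime n, the DFA A_n^m is a commutative permutation DFA with n^m states whose width equals (n−1)^{m−1}. -/
open Set

namespace AnmProof

open Function

variable {n m : ℕ}

/-- The commutative image (count vector mod `n`) of a word. -/
def cnt (n : ℕ) {m : ℕ} (w : List (Fin m)) : Fin m → ZMod n :=
  fun i => ((w.count i : ℕ) : ZMod n)

@[simp] lemma cnt_nil : cnt n ([] : List (Fin m)) = 0 := by
  funext i; simp [cnt]

lemma cnt_append (u v : List (Fin m)) : cnt n (u ++ v) = cnt n u + cnt n v := by
  funext i; simp [cnt, List.count_append]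

lemma cnt_cons (a : Fin m) (w : List (Fin m)) :
    cnt n (a :: w) = Pi.single a 1 + cnt n w := by
  funext i
  simp only [cnt, List.count_cons, Pi.add_apply, Pi.single_apply, Nat.cast_add, Nat.cast_ite,
    Nat.cast_one, Nat.cast_zero, beq_iff_eq]
  rw [add_comm]
  congr 1
  by_cases h : i = a
  · simp [h]
  · simp [h, Ne.symm h]

lemma anm_step (q : Fin m → ZMod n) (a : Fin m) :
    (Anm n m).step q a = q + Pi.single a 1 := by
  funext j
  by_cases h : j = a
  · subst h; simp [Anm]
  · simp [Anm, Function.update_of_ne h, Pi.single_eq_of_ne h]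

lemma anm_evalFrom (q : Fin m → ZMod n) (w : List (Fin m)) :
    (Anm n m).evalFrom q w = q + cnt n w := by
  induction w generalizing q with
  | nil => simp
  | cons a w ih =>
      have h : (Anm n m).evalFrom q (a :: w) = (Anm n m).evalFrom ((Anm n m).step q a) w := rfl
      rw [h, ih, anm_step, cnt_cons, add_assoc]

lemma anm_eval (w : List (Fin m)) : (Anm n m).eval w = cnt n w := by
  show (Anm n m).evalFrom (Anm n m).start w = _
  rw [anm_evalFrom]
  funext i
  simp [Anm]

lemma anm_mem_accepts (w : List (Fin m)) :
    w ∈ (Anm n m).accepts ↔ ((∃ i, cnt n w i = 0) ∧ ∃ j, cnt n w j ≠ 0) := by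
  rw [DFA.mem_accepts, anm_eval]
  rfl

/-- The rejection predicate of `Anm`. -/
def Rej {n m : ℕ} (q : Fin m → ZMod n) : Prop := q = 0 ∨ ∀ i, q i ≠ 0

lemma anm_not_accepts (w : List (Fin m)) :
    w ∉ (Anm n m).accepts ↔ Rej (cnt n w) := by
  rw [anm_mem_accepts, Rej]
  constructor
  · intro h
    by_cases hz : ∀ i, cnt n w i ≠ 0
    · exact Or.inr hz
    · push_neg at hz
      obtain ⟨i, hi⟩ := hz
      left
      funext j
      by_contra hj
      exact h ⟨⟨i, hi⟩, ⟨j, hj⟩⟩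
  · rintro (h | h) ⟨⟨i, hi⟩, ⟨j, hj⟩⟩
    · exact hj (by rw [h]; rfl)
    · exact h i hi

lemma coset_lemma (hn : n.Prime) {d γ : Fin m → ZMod n} (hd : d ≠ 0)
    (h : ∀ t : ZMod n, Rej (γ + t • d)) : ∃ t : ZMod n, γ = t • d := by
  haveI := Fact.mk hn
  obtain ⟨i0, hi0⟩ : ∃ i, d i ≠ 0 := by
    by_contra hc; push_neg at hc; exact hd (funext hc)
  set t : ZMod n := -(γ i0) * (d i0)⁻¹ with ht
  rcases h t with h0 | hN
  · refine ⟨-t, ?_⟩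
    have : γ + t • d = 0 := h0
    funext j
    have hj := congrFun this j
    simp only [Pi.add_apply, Pi.smul_apply, smul_eq_mul, Pi.zero_apply] at hj
    simp only [Pi.smul_apply, smul_eq_mul, neg_mul]
    exact eq_neg_of_add_eq_zero_left hj
  · exfalso
    apply hN i0
    simp only [Pi.add_apply, Pi.smul_apply, smul_eq_mul, ht]
    field_simp
    ring

end AnmProof

namespace AnmProof2
open AnmProof

variable {n m : ℕ}

/-- A canonical word with a given count vector. -/
def can (n : ℕ) {m : ℕ} (z : Fin m → ZMod n) : List (Fin m) :=
  (List.finRange m).flatMap fun i => List.replicate (z i).val i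

lemma count_flatMap_replicate (l : List (Fin m)) (z : Fin m → ZMod n) (j : Fin m) :
    (l.flatMap fun i => List.replicate (z i).val i).count j
      = (l.map fun i => if j = i then (z i).val else 0).sum := by
  induction l with
  | nil => simp
  | cons a l ih =>
      simp only [List.flatMap_cons, List.count_append, ih, List.map_cons, List.sum_cons,
        List.count_replicate]
      congr 1
      by_cases h : j = a
      · simp [h]
      · simp [h, Ne.symm h]

lemma cnt_can [NeZero n] (z : Fin m → ZMod n) : cnt n (can n z) = z := by
  funext j
  show (((can n z).count j : ℕ) : ZMod n) = z j
  rw [can, count_flatMap_replicate]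
  have h1 : ((List.finRange m).map fun i => if j = i then (z i).val else 0).sum
      = ∑ i : Fin m, (if j = i then (z i).val else 0) := (Fin.sum_univ_def _).symm
  rw [h1, Finset.sum_ite_eq, if_pos (Finset.mem_univ j), ZMod.natCast_zmod_val]

lemma wpow_add {α : Type} (u : List α) (a b : ℕ) :
    wpow u (a + b) = wpow u a ++ wpow u b := by
  induction a with
  | zero => simp [wpow]
  | succ a ih =>
      have : a + 1 + b = (a + b) + 1 := by omega
      rw [this]
      show u ++ wpow u (a + b) = (u ++ wpow u a) ++ wpow u b
      rw [ih, List.append_assoc]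

lemma wpow_one {α : Type} (u : List α) : wpow u 1 = u := by
  show u ++ wpow u 0 = u
  simp [wpow]

lemma cnt_wpow (u : List (Fin m)) (N : ℕ) :
    cnt n (wpow u N) = ((N : ℕ) : ZMod n) • cnt n u := by
  induction N with
  | zero => simp [wpow]
  | succ N ih =>
      show cnt n (u ++ wpow u N) = _
      rw [cnt_append, ih]
      push_cast
      rw [add_smul, one_smul, add_comm]

lemma card_fn [NeZero n] (s : ℕ) : Nat.card (Fin s → ZMod n) = n ^ s := by
  rw [Nat.card_eq_fintype_card, Fintype.card_fun, ZMod.card, Fintype.card_fin]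

end AnmProof2

namespace AnmProof3
open AnmProof AnmProof2

variable {n m : ℕ}

/-- Simultaneous action of a word on the states of all DFAs in the list. -/
def Act (l : List (FinDFA (Fin m))) (w : List (Fin m)) :
    ∀ i : Fin l.length, (l.get i).σ → (l.get i).σ :=
  fun i q => (l.get i).M.evalFrom q w

lemma Act_append (l : List (FinDFA (Fin m))) (u v : List (Fin m)) (i : Fin l.length)
    (q : (l.get i).σ) : Act l (u ++ v) i q = Act l v i (Act l u i q) :=
  DFA.evalFrom_of_append _ _ _ _

lemma exists_pow_idem [NeZero n] (l : List (FinDFA (Fin m))) (W : List (Fin m)) :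
    ∃ N : ℕ, 0 < N ∧ n ∣ N ∧
      ∀ i q, Act l (wpow W N) i (Act l (wpow W N) i q) = Act l (wpow W N) i q := by
  set u : ℕ → ∀ i : Fin l.length, (l.get i).σ → (l.get i).σ := fun t => Act l (wpow W t)
    with hu
  have hstep : ∀ t, u (t + 1) = fun i q => u t i (Act l W i q) := by
    intro t; funext i q
    show Act l (W ++ wpow W t) i q = _
    rw [Act_append]
  have main : ∀ a b : ℕ, a < b → u a = u b →
      ∃ N, 0 < N ∧ n ∣ N ∧ u (N + N) = u N := by
    intro a b hab he
    set p := b - a with hp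
    have hppos : 0 < p := by omega
    have hshift : ∀ j, u (a + j) = u (b + j) := by
      intro j
      induction j with
      | zero => simpa using he
      | succ j ih =>
          have h1 : a + (j + 1) = (a + j) + 1 := by omega
          have h2 : b + (j + 1) = (b + j) + 1 := by omega
          rw [h1, h2, hstep, hstep, ih]
    have hperiod : ∀ t, a ≤ t → u (t + p) = u t := by
      intro t ht
      obtain ⟨j, rfl⟩ : ∃ j, t = a + j := ⟨t - a, by omega⟩
      have h1 : a + j + p = b + j := by omega
      rw [h1, ← hshift]
    have hmult : ∀ t, a ≤ t → ∀ s, u (t + s * p) = u t := by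
      intro t ht s
      induction s with
      | zero => simp
      | succ s ih =>
          have h1 : t + (s + 1) * p = (t + s * p) + p := by ring
          rw [h1, hperiod _ (by omega), ih]
    have hnpos : 0 < n := Nat.pos_of_ne_zero (NeZero.ne n)
    refine ⟨(a + 1) * p * n, by positivity, ⟨(a + 1) * p, by ring⟩, ?_⟩
    have haN : a ≤ (a + 1) * p * n := by
      calc a ≤ (a + 1) * 1 * 1 := by omega
      _ ≤ (a + 1) * p * n := by
          apply Nat.mul_le_mul (Nat.mul_le_mul_left _ hppos) hnpos
    have h2 : (a + 1) * p * n + (a + 1) * p * n = (a + 1) * p * n + ((a + 1) * n) * p := by ring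
    rw [h2, hmult _ haN]
  obtain ⟨x, y, hxy, he⟩ := Finite.exists_ne_map_eq_of_infinite u
  have hres : ∃ N, 0 < N ∧ n ∣ N ∧ u (N + N) = u N := by
    rcases lt_or_gt_of_ne hxy with h | h
    · exact main x y h he
    · exact main y x h he.symm
  obtain ⟨N, hN0, hNd, hNe⟩ := hres
  refine ⟨N, hN0, hNd, ?_⟩
  intro i q
  have h1 : Act l (wpow W (N + N)) i q = Act l (wpow W N) i (Act l (wpow W N) i q) := by
    rw [wpow_add, Act_append]
  have h2 := congrFun (congrFun hNe i) q
  rw [hu] at h2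
  simp only at h2
  rw [← h1, h2]

/-- Idempotency of the action of a word on all the factors. -/
def Idem (l : List (FinDFA (Fin m))) (E : List (Fin m)) : Prop :=
  ∀ i q, Act l E i (Act l E i q) = Act l E i q

/-- Total size of the ranges of the action of a word. -/
noncomputable def mu (l : List (FinDFA (Fin m))) (E : List (Fin m)) : ℕ :=
  ∑ i : Fin l.length, (Set.range (Act l E i)).ncard

lemma exists_min_idem (n : ℕ) [NeZero n] (hm : 0 < m) (l : List (FinDFA (Fin m))) :
    ∃ E, cnt n E = 0 ∧ Idem l E ∧ ∀ E', cnt n E' = 0 → Idem l E' → mu l E ≤ mu l E' := by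
  set W : List (Fin m) := List.replicate n ⟨0, hm⟩ with hWdef
  have hW : cnt n W = 0 := by
    funext j
    show ((W.count j : ℕ) : ZMod n) = 0
    rw [hWdef, List.count_replicate]
    split <;> simp
  obtain ⟨N, hN0, hNd, hNidem⟩ := exists_pow_idem (n := n) l W
  have hcnt : cnt n (wpow W N) = 0 := by rw [cnt_wpow, hW, smul_zero]
  set S : Set ℕ := {v | ∃ E, (cnt n E = 0 ∧ Idem l E) ∧ mu l E = v} with hS
  have hSne : S.Nonempty := ⟨mu l (wpow W N), ⟨wpow W N, ⟨hcnt, hNidem⟩, rfl⟩⟩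
  obtain ⟨E, ⟨hE0, hEid⟩, hEmu⟩ := Nat.sInf_mem hSne
  exact ⟨E, hE0, hEid, fun E' h0 hid => hEmu ▸ Nat.sInf_le ⟨E', ⟨h0, hid⟩, rfl⟩⟩

lemma key (n : ℕ) [NeZero n] {l : List (FinDFA (Fin m))} {E : List (Fin m)}
    (_hE0 : cnt n E = 0) (hEid : Idem l E)
    (hmin : ∀ E', cnt n E' = 0 → Idem l E' → mu l E ≤ mu l E') (u : List (Fin m)) :
    ∃ N, 0 < N ∧ n ∣ N ∧ ∀ i q, Act l (wpow (E ++ u ++ E) N) i q = Act l E i q := by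
  set W := E ++ u ++ E with hWdef
  obtain ⟨N, hN0, hNd, hNidem⟩ := exists_pow_idem (n := n) l W
  refine ⟨N, hN0, hNd, ?_⟩
  set F : List (Fin m) := wpow W N with hF
  have hFcnt : cnt n F = 0 := by
    rw [hF, cnt_wpow]
    have h0 : ((N : ℕ) : ZMod n) = 0 := (ZMod.natCast_eq_zero_iff _ _).mpr hNd
    rw [h0, zero_smul]
  obtain ⟨R, hR⟩ : ∃ R, F = E ++ R := by
    refine ⟨(u ++ E) ++ wpow W (N - 1), ?_⟩
    rw [hF]
    conv_lhs => rw [show N = 1 + (N - 1) by omega]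
    rw [wpow_add, wpow_one, hWdef]
    simp [List.append_assoc]
  obtain ⟨P, hP⟩ : ∃ P, F = P ++ E := by
    refine ⟨wpow W (N - 1) ++ (E ++ u), ?_⟩
    rw [hF]
    conv_lhs => rw [show N = (N - 1) + 1 by omega]
    rw [wpow_add, wpow_one, hWdef]
    simp [List.append_assoc]
  have hfe : ∀ i q, Act l F i (Act l E i q) = Act l F i q := by
    intro i q
    rw [hR, Act_append, Act_append, hEid]
  have hsub : ∀ i : Fin l.length, Set.range (Act l F i) ⊆ Set.range (Act l E i) := by
    rintro i x ⟨q, hq⟩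
    exact ⟨Act l P i q, by rw [← hq, hP, Act_append]⟩
  have hmu := hmin F hFcnt (fun i q => hNidem i q)
  have hrange : ∀ i, Set.range (Act l F i) = Set.range (Act l E i) := by
    by_contra hc
    push_neg at hc
    obtain ⟨i0, hi0⟩ := hc
    have hlt : (Set.range (Act l F i0)).ncard < (Set.range (Act l E i0)).ncard := by
      have hle := Set.ncard_le_ncard (hsub i0) (Set.finite_range _)
      rcases lt_or_eq_of_le hle with h | h
      · exact h
      · exact absurd
          (Set.eq_of_subset_of_ncard_le (hsub i0) (le_of_eq h.symm) (Set.finite_range _)) hi0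
    have hlt2 : mu l F < mu l E := by
      apply Finset.sum_lt_sum (fun i _ => Set.ncard_le_ncard (hsub i) (Set.finite_range _))
      exact ⟨i0, Finset.mem_univ _, hlt⟩
    omega
  intro i q
  have h1 : Act l F i q = Act l F i (Act l E i q) := (hfe i q).symm
  have h2 : Act l E i q ∈ Set.range (Act l F i) := by rw [hrange]; exact ⟨q, rfl⟩
  obtain ⟨q1, hq1⟩ := h2
  rw [h1, ← hq1]
  exact hNidem i q1

end AnmProof3

namespace AnmProof4
open AnmProof AnmProof2

variable {n m' : ℕ}

/-- Quotient map modulo the line through `c` (when `c 0 = 1`). -/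
def pimap (n m' : ℕ) (c : Fin (m' + 1) → ZMod n) (z : Fin (m' + 1) → ZMod n) :
    Fin m' → ZMod n := fun j => z j.succ - c j.succ * z 0

lemma pimap_add (c z z' : Fin (m' + 1) → ZMod n) :
    pimap n m' c (z + z') = pimap n m' c z + pimap n m' c z' := by
  funext j; simp only [pimap, Pi.add_apply]; ring

lemma pimap_zero (c : Fin (m' + 1) → ZMod n) : pimap n m' c 0 = 0 := by
  funext j; simp [pimap]

/-- The factor DFA associated to a line. -/
def facDFA (n m' : ℕ) (c : Fin (m' + 1) → ZMod n) : DFA (Fin (m' + 1)) (Fin m' → ZMod n) where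
  step q a := q + pimap n m' c (Pi.single a 1)
  start := 0
  accept := {q | ∃ z, pimap n m' c z = q ∧ (∃ i, z i = 0) ∧ ∃ j, z j ≠ 0}

lemma fac_evalFrom (c : Fin (m' + 1) → ZMod n) (q : Fin m' → ZMod n) (w : List (Fin (m' + 1))) :
    (facDFA n m' c).evalFrom q w = q + pimap n m' c (cnt n w) := by
  induction w generalizing q with
  | nil => simp [pimap_zero]
  | cons a w ih =>
      have h : (facDFA n m' c).evalFrom q (a :: w)
          = (facDFA n m' c).evalFrom ((facDFA n m' c).step q a) w := rfl
      rw [h, ih, cnt_cons, pimap_add]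
      show q + pimap n m' c (Pi.single a 1) + _ = _
      rw [add_assoc]

lemma pimap_eq_iff {c : Fin (m' + 1) → ZMod n} (hc0 : c 0 = 1) {z z' : Fin (m' + 1) → ZMod n} :
    pimap n m' c z = pimap n m' c z' ↔ ∃ t : ZMod n, z' = z + t • c := by
  constructor
  · intro h
    refine ⟨z' 0 - z 0, ?_⟩
    funext i
    refine Fin.cases ?_ (fun j => ?_) i
    · simp only [Pi.add_apply, Pi.smul_apply, smul_eq_mul, hc0]
      ring
    · have hj := congrFun h j
      simp only [pimap] at hj
      simp only [Pi.add_apply, Pi.smul_apply, smul_eq_mul]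
      linear_combination -hj
  · rintro ⟨t, rfl⟩
    funext j
    simp only [pimap, Pi.add_apply, Pi.smul_apply, smul_eq_mul, hc0]
    ring

lemma fac_mem_accepts {c : Fin (m' + 1) → ZMod n} (hc0 : c 0 = 1) (w : List (Fin (m' + 1))) :
    w ∈ (facDFA n m' c).accepts ↔
      ∃ t : ZMod n, (∃ i, (cnt n w + t • c) i = 0) ∧ ∃ j, (cnt n w + t • c) j ≠ 0 := by
  rw [DFA.mem_accepts]
  show (facDFA n m' c).evalFrom (facDFA n m' c).start w ∈ _ ↔ _
  rw [show (facDFA n m' c).start = 0 from rfl, fac_evalFrom, zero_add]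
  constructor
  · rintro ⟨z, hz, h1, h2⟩
    obtain ⟨t, rfl⟩ := (pimap_eq_iff hc0).mp hz.symm
    exact ⟨t, h1, h2⟩
  · rintro ⟨t, h1, h2⟩
    exact ⟨cnt n w + t • c, ((pimap_eq_iff hc0).mpr ⟨t, rfl⟩).symm, h1, h2⟩

/-- The bundled factor. -/
def facFin (n m' : ℕ) [NeZero n] (c : Fin (m' + 1) → ZMod n) : FinDFA (Fin (m' + 1)) where
  σ := Fin m' → ZMod n
  M := facDFA n m' c

/-- The representative of a line. -/
def cOf (n m' : ℕ) (g : Fin m' → {x : ZMod n // x ≠ 0}) : Fin (m' + 1) → ZMod n :=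
  Fin.cons 1 (fun j => (g j : ZMod n))

lemma cOf_zero (g : Fin m' → {x : ZMod n // x ≠ 0}) : cOf n m' g 0 = 1 := rfl

lemma cOf_ne [Nontrivial (ZMod n)] (g : Fin m' → {x : ZMod n // x ≠ 0}) (i : Fin (m' + 1)) :
    cOf n m' g i ≠ 0 := by
  refine Fin.cases ?_ (fun j => ?_) i
  · rw [cOf_zero]; exact one_ne_zero
  · show cOf n m' g j.succ ≠ 0
    simp only [cOf, Fin.cons_succ]
    exact (g j).2

lemma card_U [NeZero n] : Fintype.card {x : ZMod n // x ≠ 0} = n - 1 := by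
  have h := Fintype.card_subtype_compl (fun x : ZMod n => x = 0)
  rw [ZMod.card, Fintype.card_subtype_eq] at h
  exact h

lemma upper (n m' : ℕ) (hn : n.Prime) :
    ∃ ll : List (FinDFA (Fin (m' + 1))), ll.length = (n - 1) ^ m' ∧
      IsDecomposition (Anm n (m' + 1)) ll := by
  haveI := Fact.mk hn
  haveI : NeZero n := ⟨hn.ne_zero⟩
  haveI := Fact.mk hn.one_lt
  set ll : List (FinDFA (Fin (m' + 1))) :=
    ((Finset.univ : Finset (Fin m' → {x : ZMod n // x ≠ 0})).toList).map
      (fun g => facFin n m' (cOf n m' g)) with hll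
  have hmemll : ∀ g : Fin m' → {x : ZMod n // x ≠ 0}, facFin n m' (cOf n m' g) ∈ ll := by
    intro g
    rw [hll]
    exact List.mem_map.mpr ⟨g, Finset.mem_toList.mpr (Finset.mem_univ g), rfl⟩
  refine ⟨ll, ?_, ?_, ?_⟩
  · rw [hll, List.length_map, Finset.length_toList, Finset.card_univ, Fintype.card_fun,
      card_U, Fintype.card_fin]
  · intro B hB
    obtain ⟨g, _, rfl⟩ := List.mem_map.mp hB
    show Nat.card (Fin m' → ZMod n) < Nat.card (Fin (m' + 1) → ZMod n)
    rw [card_fn, card_fn]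
    exact Nat.pow_lt_pow_succ hn.one_lt
  · intro w
    constructor
    · intro hw B hB
      obtain ⟨g, _, rfl⟩ := List.mem_map.mp hB
      show w ∈ (facDFA n m' (cOf n m' g)).accepts
      rw [fac_mem_accepts (cOf_zero g)]
      refine ⟨0, ?_⟩
      simpa using (anm_mem_accepts w).mp hw
    · intro hB
      by_contra hw
      rw [anm_not_accepts] at hw
      rcases hw with h0 | hN
      · set g0 : Fin m' → {x : ZMod n // x ≠ 0} := fun _ => ⟨1, one_ne_zero⟩ with hg0
        have hacc := hB _ (hmemll g0)
        rw [show (facFin n m' (cOf n m' g0)).accepts = (facDFA n m' (cOf n m' g0)).accepts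
          from rfl, fac_mem_accepts (cOf_zero g0)] at hacc
        obtain ⟨t, ⟨i, hi⟩, ⟨j, hj⟩⟩ := hacc
        rw [h0] at hi hj
        simp only [Pi.add_apply, Pi.zero_apply, Pi.smul_apply, smul_eq_mul, zero_add] at hi hj
        rcases mul_eq_zero.mp hi with ht | hc
        · exact hj (by rw [ht, zero_mul])
        · exact cOf_ne g0 i hc
      · set γ := cnt n w with hγdef
        set g : Fin m' → {x : ZMod n // x ≠ 0} :=
          fun j => ⟨(γ 0)⁻¹ * γ j.succ, mul_ne_zero (inv_ne_zero (hN 0)) (hN j.succ)⟩ with hg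
        have hγ : γ = γ 0 • cOf n m' g := by
          funext i
          refine Fin.cases ?_ (fun j => ?_) i
          · simp only [Pi.smul_apply, smul_eq_mul, cOf_zero, mul_one]
          · simp only [Pi.smul_apply, smul_eq_mul, cOf, Fin.cons_succ, hg]
            rw [mul_inv_cancel_left₀ (hN 0)]
        have hacc := hB _ (hmemll g)
        rw [show (facFin n m' (cOf n m' g)).accepts = (facDFA n m' (cOf n m' g)).accepts
          from rfl, fac_mem_accepts (cOf_zero g)] at hacc
        obtain ⟨t, ⟨i, hi⟩, ⟨j, hj⟩⟩ := hacc
        rw [← hγdef, hγ] at hi hj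
        have hi' : (γ 0 + t) * cOf n m' g i = 0 := by
          simpa [add_smul, add_mul, Pi.smul_apply, smul_eq_mul] using hi
        have hj' : (γ 0 + t) * cOf n m' g j ≠ 0 := by
          simpa [add_smul, add_mul, Pi.smul_apply, smul_eq_mul] using hj
        rcases mul_eq_zero.mp hi' with ht | hc
        · exact hj' (by rw [ht, zero_mul])
        · exact cOf_ne g i hc

end AnmProof4

namespace AnmProof5
open AnmProof AnmProof2 AnmProof3 AnmProof4

lemma lower (n m' : ℕ) (hn : n.Prime) (l : List (FinDFA (Fin (m' + 1))))
    (hdec : IsDecomposition (Anm n (m' + 1)) l) : (n - 1) ^ m' ≤ l.length := by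
  haveI := Fact.mk hn
  haveI : NeZero n := ⟨hn.ne_zero⟩
  haveI := Fact.mk hn.one_lt
  obtain ⟨E, hE0, hEid, hmin⟩ := exists_min_idem n (Nat.succ_pos m') l
  have startE : ∀ (X : List (Fin (m' + 1))) (i : Fin l.length) (q : (l.get i).σ),
      Act l (E ++ X) i (Act l E i q) = Act l (E ++ X) i q := by
    intro X i q
    rw [Act_append, Act_append, hEid]
  have hfac : ∀ i : Fin l.length, ∃ d : Fin (m' + 1) → ZMod n, d ≠ 0 ∧
      ∀ v : List (Fin (m' + 1)), (E ++ v ++ E) ∉ (l.get i).accepts →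
        ∃ t : ZMod n, cnt n v = t • d := by
    intro i
    have hcard : Nat.card ((l.get i).σ) < n ^ (m' + 1) := by
      have h := hdec.1 (l.get i) (List.get_mem l i)
      rwa [card_fn] at h
    set φ : (Fin (m' + 1) → ZMod n) → (l.get i).σ :=
      fun z => Act l (E ++ can n z ++ E) i ((l.get i).M.start) with hφ
    have hninj : ¬ Function.Injective φ := by
      intro hinj
      have h2 := Nat.card_le_card_of_injective φ hinj
      rw [card_fn] at h2
      omega
    rw [Function.not_injective_iff] at hninj
    obtain ⟨z, z', hφeq, hzz⟩ := hninj
    obtain ⟨N, hN0, hNd, hNkey⟩ := key n hE0 hEid hmin (can n z)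
    set d : Fin (m' + 1) → ZMod n := z' - z with hd
    have hdne : d ≠ 0 := sub_ne_zero.mpr (Ne.symm hzz)
    refine ⟨d, hdne, ?_⟩
    set W : List (Fin (m' + 1)) := E ++ can n z ++ E with hW
    set L0 : List (Fin (m' + 1)) := (E ++ can n z' ++ E) ++ wpow W (N - 1) with hL0
    have hL0' : L0 = E ++ ((can n z' ++ E) ++ wpow W (N - 1)) := by
      rw [hL0]; simp [List.append_assoc]
    have hNcast : ((N : ℕ) : ZMod n) = 0 := (ZMod.natCast_eq_zero_iff _ _).mpr hNd
    have hcntL0 : cnt n L0 = d := by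
      rw [hL0, cnt_append, cnt_append, cnt_append, hE0, cnt_can, cnt_wpow]
      have h1 : cnt n W = z := by
        rw [hW, cnt_append, cnt_append, hE0, cnt_can]
        simp
      rw [h1, Nat.cast_sub hN0, hNcast, Nat.cast_one, hd]
      simp only [add_zero, zero_add, zero_sub, neg_smul, one_smul]
      abel
    set s0 := (l.get i).M.start with hs0
    have hAz : Act l (E ++ can n z' ++ E) i s0 = Act l W i s0 := hφeq.symm
    have hWN : ∀ q, Act l (wpow W N) i q = Act l E i q := fun q => hNkey i q
    have hL0s : Act l L0 i s0 = Act l E i s0 := by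
      rw [hL0, Act_append, hAz, ← Act_append]
      have h2 : W ++ wpow W (N - 1) = wpow W N := by
        conv_rhs => rw [show N = (N - 1) + 1 by omega]
        rfl
      rw [h2, hWN]
    have hL0e : Act l L0 i (Act l E i s0) = Act l E i s0 := by
      calc Act l L0 i (Act l E i s0)
          = Act l (E ++ ((can n z' ++ E) ++ wpow W (N - 1))) i (Act l E i s0) := by rw [← hL0']
        _ = Act l (E ++ ((can n z' ++ E) ++ wpow W (N - 1))) i s0 := startE _ i s0
        _ = Act l L0 i s0 := by rw [← hL0']
        _ = Act l E i s0 := hL0s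
    have hpow : ∀ t : ℕ, Act l (wpow L0 (t + 1)) i s0 = Act l E i s0 := by
      intro t
      induction t with
      | zero => rw [wpow_one]; exact hL0s
      | succ t ih =>
          have h2 : wpow L0 (t + 1 + 1) = wpow L0 (t + 1) ++ L0 := by
            rw [wpow_add, wpow_one]
          rw [h2, Act_append, ih, hL0e]
    have hloop : ∀ (t : ℕ) (v : List (Fin (m' + 1))),
        Act l (wpow L0 t ++ (E ++ v ++ E)) i s0 = Act l (E ++ v ++ E) i s0 := by
      intro t v
      cases t with
      | zero => simp [wpow]
      | succ t =>
          rw [Act_append, hpow t]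
          have h2 : E ++ v ++ E = E ++ (v ++ E) := by simp [List.append_assoc]
          rw [h2, startE]
    intro v hv
    have hrejt : ∀ t : ℕ, Rej (cnt n v + (t : ZMod n) • d) := by
      intro t
      have hrej : (wpow L0 t ++ (E ++ v ++ E)) ∉ (l.get i).accepts := by
        intro hmem
        apply hv
        have hmem' : Act l (wpow L0 t ++ (E ++ v ++ E)) i s0 ∈ (l.get i).M.accept := hmem
        rw [hloop t v] at hmem'
        exact hmem'
      have hrejA : (wpow L0 t ++ (E ++ v ++ E)) ∉ (Anm n (m' + 1)).accepts := by
        intro hA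
        exact hrej ((hdec.2 _).mp hA _ (List.get_mem l i))
      have h3 := (anm_not_accepts _).mp hrejA
      have hc : cnt n (wpow L0 t ++ (E ++ v ++ E)) = cnt n v + (t : ZMod n) • d := by
        rw [cnt_append, cnt_append, cnt_append, hE0, cnt_wpow, hcntL0]
        simp only [add_zero, zero_add]
        abel
      rwa [hc] at h3
    have hAll : ∀ T : ZMod n, Rej (cnt n v + T • d) := by
      intro T
      have h4 := hrejt T.val
      rwa [ZMod.natCast_zmod_val] at h4
    exact coset_lemma hn hdne hAll
  choose D hD using hfac
  have hcover : ∀ g : Fin m' → {x : ZMod n // x ≠ 0},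
      ∃ i : Fin l.length, (E ++ can n (cOf n m' g) ++ E) ∉ (l.get i).accepts := by
    intro g
    have hcg : cnt n (E ++ can n (cOf n m' g) ++ E) = cOf n m' g := by
      rw [cnt_append, cnt_append, hE0, cnt_can]
      simp
    have hrejA : (E ++ can n (cOf n m' g) ++ E) ∉ (Anm n (m' + 1)).accepts := by
      rw [anm_not_accepts, hcg]
      exact Or.inr (fun i0 => cOf_ne g i0)
    by_contra hc
    push_neg at hc
    apply hrejA
    rw [hdec.2]
    intro B hB
    obtain ⟨i, hi⟩ := List.mem_iff_get.mp hB
    rw [← hi]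
    exact hc i
  choose F hF using hcover
  have hFinj : Function.Injective F := by
    intro g1 g2 hg
    obtain ⟨t1, ht1⟩ := (hD (F g1)).2 (can n (cOf n m' g1)) (hF g1)
    obtain ⟨t2, ht2⟩ := (hD (F g2)).2 (can n (cOf n m' g2)) (hF g2)
    rw [cnt_can] at ht1 ht2
    rw [hg] at ht1
    have ht1ne : t1 ≠ 0 := by
      intro h0
      rw [h0, zero_smul] at ht1
      have := congrFun ht1 0
      rw [cOf_zero] at this
      exact one_ne_zero this
    have hD2 : D (F g2) = t1⁻¹ • cOf n m' g1 := by
      rw [ht1, smul_smul, inv_mul_cancel₀ ht1ne, one_smul]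
    rw [hD2, smul_smul] at ht2
    have hsc : t2 * t1⁻¹ = 1 := by
      have h5 := congrFun ht2 0
      simp only [Pi.smul_apply, smul_eq_mul, cOf_zero, mul_one] at h5
      exact h5.symm
    rw [hsc, one_smul] at ht2
    funext j
    have h6 := congrFun ht2 j.succ
    simp only [cOf, Fin.cons_succ] at h6
    exact Subtype.ext h6.symm
  have hcard := Fintype.card_le_of_injective F hFinj
  rw [Fintype.card_fun, card_U, Fintype.card_fin, Fintype.card_fin] at hcard
  exact hcard

end AnmProof5

/-- for `m ≥ 1` and `n` prime, `A_n^m` is a commutative permutation DFA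
with `n^m` states whose width is `(n-1)^(m-1)`. -/
theorem Anm_width (n m : ℕ) (hm : 1 ≤ m) (hn : n.Prime) :
    IsPermutationDFA (Anm n m) ∧ CommutativeDFA (Anm n m) ∧
    Nat.card (Fin m → ZMod n) = n ^ m ∧
    DFAwidth (Anm n m) = (n - 1) ^ (m - 1) := by
  haveI := Fact.mk hn
  haveI : NeZero n := ⟨hn.ne_zero⟩
  refine ⟨?_, ?_, ?_, ?_⟩
  · intro a
    have h : (fun q => (Anm n m).step q a) = fun q : Fin m → ZMod n => q + Pi.single a 1 :=
      funext (fun q => AnmProof.anm_step q a)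
    rw [h]
    exact (Equiv.addRight (Pi.single a 1 : Fin m → ZMod n)).bijective
  · intro q u v
    rw [AnmProof.anm_evalFrom, AnmProof.anm_evalFrom, AnmProof.cnt_append, AnmProof.cnt_append]
    abel
  · exact AnmProof2.card_fn m
  · obtain ⟨m', rfl⟩ : ∃ m'', m = m'' + 1 := ⟨m - 1, by omega⟩
    obtain ⟨ll, hlen, hd⟩ := AnmProof4.upper n m' hn
    have hmem : (n - 1) ^ m' ∈
        {k : ℕ | ∃ l : List (FinDFA (Fin (m' + 1))), l.length = k ∧
          IsDecomposition (Anm n (m' + 1)) l} := ⟨ll, hlen, hd⟩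
    have hle : DFAwidth (Anm n (m' + 1)) ≤ (n - 1) ^ m' := Nat.sInf_le hmem
    obtain ⟨l2, hl2, hd2⟩ := Nat.sInf_mem (Set.nonempty_of_mem hmem)
    have hge := AnmProof5.lower n m' hn l2 hd2
    have hfin : (n - 1) ^ m' ≤ DFAwidth (Anm n (m' + 1)) := le_trans hge (le_of_eq hl2)
    have hmm : (m' + 1) - 1 = m' := rfl
    rw [hmm]
    exact le_antisymm hle hfin
end
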